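/- arXiv:nlin/0306040 — 4 statements merged into one kernel-verified Lean document; each statement's English description precedes it below -/
import Mathlib

section
/- Let Q = {0,…,q−1}, let f : Q^n → Q be conservative (f ∈ CA^0(q,n)), let 0 ≤ ℓ ≤ n−1, r = n−1−ℓ, and let F : Q^ℤ → Q^ℤ be the CA F(c)_i = f(c_{i−ℓ},…,c_{i+r}). Then there exists a conservative particle automaton G whose global map equals F and which preserves the order of particles: there is no configuration c ∈ Q^ℤ and positions i_0 ≠ j_0 with c_{i_0} ≥ 1 and c_{j_0} ≥ 1, and particle indices k, k', such that, writing i_1 = i_0 + (k-th entry of g_{c_{i_0}} at i_0) and j_1 = j_0 + (k'-th entry of g_{c_{j_0}} at j_0) (both entries being integers, not †), one has i_0 < j_0 ≤ j_1 < i_1 or i_1 < j_1 ≤ j_0 < i_0. -/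
/-!
Number the particles of a configuration `c` from left to right, the `k`-th particle of cell `j`
getting the label `cumMass c (j - 1) + k`. Conservation of `f` yields a local flow `φ(e)` across
each edge `e | e + 1` with `F(c)_e = c_e + φ(e - 1) - φ(e)`, so `U(e) = cumMass c e - φ(e)` is a
nondecreasing count of the particles of `F(c)`. Sending the particle labelled `x` to the cell `e`
with `U(e - 1) ≤ x < U(e)` realizes `F`, and it is monotone in the label, hence order preserving.
The bounds `cumMass c (e - ℓ) ≤ U(e) ≤ cumMass c (e + r)`, where `r = n - 1 - ℓ`, confine the
displacements to `{-r, …, ℓ}` and make them computable from a bounded context.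
-/

/-- A particle automaton (PA) with states `Q = {0,…,q−1}` and neighborhood
`N = {−L,…,R}`.  For each state `v` and each context
`(u, u') ∈ Q^L × Q^R` (the states of the `L` cells to the left and the `R` cells to the
right), `g v u u'` is a list of `v` values in `N ∪ {†}`, encoded as `Option ℤ` where
`none` is the vanishing symbol `†` and `some d` is a displacement `d ∈ {−L,…,R}`. -/
structure PA (q L R : ℕ) where
  g : (v : Fin q) → (Fin L → Fin q) → (Fin R → Fin q) → Fin (v : ℕ) → Option ℤ
  mem_range : ∀ v u u' k d, g v u u' k = some d → -(L : ℤ) ≤ d ∧ d ≤ (R : ℤ)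

namespace PA

variable {q L R : ℕ}

/-- `N(c,j,i)`: the number of particles sent from cell `j` to cell `i` in
configuration `c`. -/
def count (A : PA q L R) (c : ℤ → Fin q) (j i : ℤ) : ℕ :=
  (Finset.univ.filter fun k : Fin ((c j : ℕ)) =>
    A.g (c j) (fun t => c (j - (L : ℤ) + ((t : ℕ) : ℤ)))
      (fun t => c (j + 1 + ((t : ℕ) : ℤ))) k = some (i - j)).card

/-- The global map of the PA: `G(c)_i = min(q−1, ∑_{j∈ℤ} N(c,j,i))`. -/
noncomputable def glob [NeZero q] (A : PA q L R) (c : ℤ → Fin q) (i : ℤ) : Fin q :=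
  ⟨min (q - 1) (∑ᶠ j : ℤ, A.count c j i),
    lt_of_le_of_lt (Nat.min_le_left _ _)
      (by have := Nat.pos_of_ne_zero (NeZero.ne q); omega)⟩

/-- A PA is conservative if no entry of any `g_v` on any context is `†`, and the total
number of particles arriving at any cell is at most `q − 1` (no overflow). -/
def Conservative (A : PA q L R) : Prop :=
  (∀ v u u' k, A.g v u u' k ≠ none) ∧
  (∀ (c : ℤ → Fin q) (i : ℤ), (∑ᶠ j : ℤ, A.count c j i) ≤ q - 1)

end PA

/-- A local rule `f ∈ CA(q,n)` is conservative (`f ∈ CA^0(q,n)`). -/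
def Conserves (q n : ℕ) (f : (Fin n → Fin q) → Fin q) : Prop :=
  ∀ p : ℕ, 1 ≤ p → ∀ w : ℤ → Fin q, (∀ i : ℤ, w (i + (p : ℤ)) = w i) →
    ∑ k ∈ Finset.range p, ((f (fun t => w ((k : ℤ) + ((t : ℕ) : ℤ)))) : ℤ) =
    ∑ k ∈ Finset.range p, ((w (k : ℤ)) : ℤ)


open Finset

section IntervalSums

variable {M : Type*}

theorem Finset.sum_Ioc_add_sum_Ioc [AddCommMonoid M] {α : Type*} [LinearOrder α]
    [LocallyFiniteOrder α] (g : α → M) {a b c : α} (hab : a ≤ b) (hbc : b ≤ c) :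
    ∑ t ∈ Ioc a b, g t + ∑ t ∈ Ioc b c, g t = ∑ t ∈ Ioc a c, g t := by
  rw [← sum_union (Ioc_disjoint_Ioc_of_le le_rfl), Ioc_union_Ioc_eq_Ioc hab hbc]

theorem Int.sum_Ioc_sub_one_add [AddCommMonoid M] (g : ℤ → M) {a b : ℤ} (hab : a < b) :
    ∑ t ∈ Ioc a (b - 1), g t + g b = ∑ t ∈ Ioc a b, g t := by
  have hb : Ioc (b - 1) b = {b} := by
    ext t
    simp only [mem_Ioc, mem_singleton]
    omega
  rw [← sum_Ioc_add_sum_Ioc g (by omega : a ≤ b - 1) (by omega : b - 1 ≤ b), hb, sum_singleton]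

theorem Int.sum_Ioc_comp_add [AddCommMonoid M] (g : ℤ → M) (s a b : ℤ) :
    ∑ t ∈ Ioc a b, g (s + t) = ∑ t ∈ Ioc (s + a) (s + b), g t := by
  rw [← map_add_left_Ioc, sum_map]
  rfl

theorem Int.sum_Ioc_eq_sum_range [AddCommMonoid M] (g : ℤ → M) (a b : ℤ) :
    ∑ t ∈ Ioc a b, g t = ∑ k ∈ Finset.range (b - a).toNat, g (a + 1 + k) := by
  rw [Int.Ioc_eq_finset_map, sum_map]
  rfl

theorem Int.sum_Ioc_eq_sum_Ioc_of_eq_zero [AddCommMonoid M] {g : ℤ → M} {m lo : ℤ}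
    (hg : ∀ t ≤ m, g t = 0) (hlo : lo ≤ m) (e : ℤ) :
    ∑ t ∈ Ioc lo e, g t = ∑ t ∈ Ioc m e, g t := by
  refine (sum_subset (Ioc_subset_Ioc_left hlo) fun t ht hnt => hg t ?_).symm
  simp only [mem_Ioc] at ht hnt
  omega

noncomputable def cumSum [AddCommGroup M] (g : ℤ → M) (e : ℤ) : M :=
  ∑ t ∈ Ioc 0 e, g t - ∑ t ∈ Ioc e 0, g t

variable [AddCommGroup M] {g : ℤ → M}

theorem cumSum_eq_sub {m e : ℤ} (hm : m ≤ 0) (hme : m ≤ e) :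
    cumSum g e = ∑ t ∈ Ioc m e, g t - ∑ t ∈ Ioc m 0, g t := by
  rcases le_total 0 e with he | he
  · rw [cumSum, Ioc_eq_empty_of_le he, sum_empty, sub_zero, ← sum_Ioc_add_sum_Ioc g hm he,
      add_sub_cancel_left]
  · rw [cumSum, Ioc_eq_empty_of_le he, sum_empty, zero_sub, ← sum_Ioc_add_sum_Ioc g hme he,
      sub_add_cancel_left]

theorem cumSum_sub_cumSum {a b : ℤ} (hab : a ≤ b) :
    cumSum g b - cumSum g a = ∑ t ∈ Ioc a b, g t := by
  rw [cumSum_eq_sub (min_le_right a 0) (by omega : min a 0 ≤ b),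
    cumSum_eq_sub (min_le_right a 0) (min_le_left a 0),
    ← sum_Ioc_add_sum_Ioc g (min_le_left a 0) hab]
  abel

theorem cumSum_sub_cumSum_sub_one (e : ℤ) : cumSum g e - cumSum g (e - 1) = g e := by
  rw [cumSum_sub_cumSum (by omega), ← Int.sum_Ioc_sub_one_add g (by omega : e - 1 < e),
    Ioc_self, sum_empty, zero_add]

theorem cumSum_sub_cumSum_of_eqOn_add {g' : ℤ → M} {a b s : ℤ}
    (h : ∀ x ∈ Set.uIoc a b, g' x = g (s + x)) :
    cumSum g' b - cumSum g' a = cumSum g (s + b) - cumSum g (s + a) := by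
  wlog hab : a ≤ b generalizing a b
  · rw [← neg_sub, this (by rwa [Set.uIoc_comm]) (by omega), neg_sub]
  rw [cumSum_sub_cumSum hab, cumSum_sub_cumSum (by omega), ← Int.sum_Ioc_comp_add]
  exact sum_congr rfl fun x hx => h x (by rwa [Set.uIoc_of_le hab, ← coe_Ioc])

theorem monotone_cumSum {M : Type*} [AddCommGroup M] [PartialOrder M] [IsOrderedAddMonoid M]
    {g : ℤ → M} (hg : ∀ t, 0 ≤ g t) : Monotone (cumSum g) := fun a b hab =>
  sub_nonneg.1 (by rw [cumSum_sub_cumSum hab]; exact sum_nonneg fun t _ => hg t)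

end IntervalSums

section Crossings

variable {ψ ψ' : ℤ → ℤ}

theorem Monotone.setOf_lt_eq_Ici (hψ : Monotone ψ) {x e : ℤ} (h₁ : ψ (e - 1) ≤ x)
    (h₂ : x < ψ e) : {d | x < ψ d} = Set.Ici e := by
  ext d
  simp only [Set.mem_ofPred_eq, Set.mem_Ici]
  refine ⟨fun hd => ?_, fun hd => h₂.trans_le (hψ hd)⟩
  by_contra hlt
  have := hψ (show d ≤ e - 1 by omega)
  omega

theorem Monotone.sInf_setOf_lt_eq_iff (hψ : Monotone ψ) {a b x e : ℤ} (ha : ψ a ≤ x)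
    (hb : x < ψ b) : sInf {d | x < ψ d} = e ↔ ψ (e - 1) ≤ x ∧ x < ψ e := by
  obtain ⟨e₀, he₀, hmin⟩ := Int.exists_least_of_bdd (P := fun d => x < ψ d)
    ⟨a, fun z hz => le_of_lt (hψ.reflect_lt (ha.trans_lt hz))⟩ ⟨b, hb⟩
  have he₀' : ψ (e₀ - 1) ≤ x := not_lt.1 fun h => by have := hmin _ h; omega
  rw [hψ.setOf_lt_eq_Ici he₀' he₀, csInf_Ici]
  refine ⟨by rintro rfl; exact ⟨he₀', he₀⟩, fun ⟨h₁, h₂⟩ => ?_⟩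
  exact Set.Ici_inj.1 ((hψ.setOf_lt_eq_Ici he₀' he₀).symm.trans (hψ.setOf_lt_eq_Ici h₁ h₂))

theorem Monotone.setOf_lt_eq_of_eqOn (hψ : Monotone ψ) (hψ' : Monotone ψ') {a b x x' : ℤ}
    (h : ∀ d ∈ Set.Icc a b, ψ d - x = ψ' d - x') (ha : ψ a ≤ x) (hb : x < ψ b) :
    {d | x < ψ d} = {d | x' < ψ' d} := by
  have hab : a ≤ b := (hψ.reflect_lt (ha.trans_lt hb)).le
  have hA := h a ⟨le_rfl, hab⟩
  have hB := h b ⟨hab, le_rfl⟩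
  ext d
  simp only [Set.mem_ofPred_eq]
  rcases lt_or_ge d a with hda | hda
  · have := hψ hda.le
    have := hψ' hda.le
    omega
  rcases le_or_gt d b with hdb | hdb
  · have := h d ⟨hda, hdb⟩
    omega
  · have := hψ hdb.le
    have := hψ' hdb.le
    omega

end Crossings

theorem card_filter_fin_add_mem (m : ℕ) (v : ℤ) (I : Finset ℤ) :
    #{k : Fin m | v + (k : ℕ) ∈ I} = #(Ico v (v + m) ∩ I) := by
  refine card_bij (fun k _ => v + (k : ℕ)) (fun k hk => ?_) (fun k _ k' _ h => ?_)
    (fun x hx => ?_)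
  · simp only [mem_filter, mem_univ, true_and] at hk
    simp only [mem_inter, mem_Ico, hk, and_true]
    omega
  · exact Fin.ext (by omega)
  · simp only [mem_inter, mem_Ico] at hx
    refine ⟨⟨(x - v).toNat, by omega⟩, ?_, by simp only; omega⟩
    simp only [mem_filter, mem_univ, true_and]
    convert hx.2
    omega

theorem sum_card_Ico_inter {V : ℤ → ℤ} (hV : Monotone V) (I : Finset ℤ) {a b : ℤ}
    (hab : a ≤ b) :
    ∑ j ∈ Ioc a b, #(Ico (V (j - 1)) (V j) ∩ I) = #(Ico (V a) (V b) ∩ I) := by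
  induction b, hab using Int.leInduction with
  | base => simp
  | succ b hab ih =>
    rw [← Int.sum_Ioc_sub_one_add _ (by omega : a < b + 1), add_sub_cancel_right, ih,
      ← card_union_of_disjoint ((Ico_disjoint_Ico_consecutive _ _ _).mono inter_subset_left
        inter_subset_left), ← union_inter_distrib_right,
      Ico_union_Ico_eq_Ico (hV hab) (hV (by omega))]

theorem Int.exists_periodic_eqOn {α : Type*} [Zero α] {c : ℤ → α} {a b lo hi m : ℤ}
    (hc : ∀ x ∉ Set.Ioc a b, c x = 0) (hab : a ≤ b) (hm : 0 < m) (hlo : lo + m ≤ a)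
    (hhi : b + m ≤ hi) :
    ∃ w : ℤ → α, Function.Periodic w (hi - lo) ∧ ∀ x ∈ Set.Ioc (lo - m) (hi + m), w x = c x := by
  set p := hi - lo
  let w : ℤ → α := fun x => c (lo + 1 + (x - lo - 1) % p)
  have hw : Function.Periodic w p := fun x => by
    simp only [w, show x + p - lo - 1 = x - lo - 1 + p by ring, Int.add_emod_right]
  have hmain : ∀ x ∈ Set.Ioc lo hi, w x = c x := fun x ⟨h₁, h₂⟩ => by
    simp only [w, Int.emod_eq_of_lt (by omega : 0 ≤ x - lo - 1) (by omega : x - lo - 1 < p)]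
    congr 1
    ring
  refine ⟨w, hw, fun x ⟨h₁, h₂⟩ => ?_⟩
  rcases le_or_gt x lo with hx | hx
  · rw [← hw x, hmain _ ⟨by omega, by omega⟩, hc _ (by simp; omega), hc _ (by simp; omega)]
  rcases le_or_gt x hi with hx' | hx'
  · exact hmain x ⟨hx, hx'⟩
  · rw [← hw.sub_eq x, hmain _ ⟨by omega, by omega⟩, hc _ (by simp; omega),
      hc _ (by simp; omega)]

theorem Conserves.apply_zero {q n : ℕ} [NeZero q] {f : (Fin n → Fin q) → Fin q}
    (hf : Conserves q n f) : f (fun _ => 0) = 0 := by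
  have h := hf 1 le_rfl (fun _ => 0) (fun _ => rfl)
  simp only [Finset.range_one, sum_singleton, Fin.val_zero, Nat.cast_zero] at h
  exact Fin.ext (by simpa using h)

namespace CA

variable {q n ℓ : ℕ} {f : (Fin n → Fin q) → Fin q}

def mass (c : ℤ → Fin q) (t : ℤ) : ℤ := (c t : ℕ)

theorem mass_nonneg (c : ℤ → Fin q) (t : ℤ) : 0 ≤ mass c t := Int.natCast_nonneg _

noncomputable def cumMass (c : ℤ → Fin q) : ℤ → ℤ := cumSum (mass c)

theorem monotone_cumMass (c : ℤ → Fin q) : Monotone (cumMass c) :=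
  monotone_cumSum (mass_nonneg c)

theorem cumMass_sub_one_add_mass (c : ℤ → Fin q) (j : ℤ) :
    cumMass c (j - 1) + mass c j = cumMass c j := by
  have := cumSum_sub_cumSum_sub_one (g := mass c) j
  unfold cumMass
  linarith

noncomputable def label (c : ℤ → Fin q) (j : ℤ) (k : ℕ) : ℤ := cumMass c (j - 1) + k

theorem label_lt_label (c : ℤ → Fin q) {i j : ℤ} (hij : i < j) {k : ℕ} (hk : k < (c i : ℕ))
    (k' : ℕ) : label c i k < label c j k' := by
  have h₁ := cumMass_sub_one_add_mass c i
  have h₂ := monotone_cumMass c (show i ≤ j - 1 by omega)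
  rw [mass] at h₁
  rw [label, label]
  omega

def globalMap (f : (Fin n → Fin q) → Fin q) (ℓ : ℕ) (c : ℤ → Fin q) (i : ℤ) : Fin q :=
  f (fun t => c (i - (ℓ : ℤ) + ((t : ℕ) : ℤ)))

theorem globalMap_congr {c c' : ℤ → Fin q} {i : ℤ}
    (h : ∀ x ∈ Set.Ico (i - ℓ) (i - ℓ + n), c x = c' x) :
    globalMap f ℓ c i = globalMap f ℓ c' i := by
  unfold globalMap
  congr 1
  funext t
  exact h _ ⟨by omega, by have := t.isLt; omega⟩

theorem globalMap_comp_add (c : ℤ → Fin q) (s i : ℤ) :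
    globalMap f ℓ (fun x => c (s + x)) i = globalMap f ℓ c (s + i) := by
  simp only [globalMap, add_sub_assoc, add_assoc]

def netOutflow (f : (Fin n → Fin q) → Fin q) (ℓ : ℕ) (c : ℤ → Fin q) (t : ℤ) : ℤ :=
  mass c t - mass (globalMap f ℓ c) t

theorem netOutflow_congr (hℓ : ℓ < n) {c c' : ℤ → Fin q} {t : ℤ}
    (h : ∀ x ∈ Set.Ico (t - ℓ) (t - ℓ + n), c x = c' x) :
    netOutflow f ℓ c t = netOutflow f ℓ c' t := by
  simp only [netOutflow, mass, globalMap_congr h, h t ⟨by omega, by omega⟩]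

theorem netOutflow_comp_add (c : ℤ → Fin q) (s t : ℤ) :
    netOutflow f ℓ (fun x => c (s + x)) t = netOutflow f ℓ c (s + t) := by
  simp only [netOutflow, mass, globalMap_comp_add]

variable [NeZero q]

theorem mass_of_eq_zero {c : ℤ → Fin q} {t : ℤ} (h : c t = 0) : mass c t = 0 := by
  simp [mass, h]

theorem sum_mass_eq_of_support {c : ℤ → Fin q} {a b lo hi : ℤ}
    (hc : ∀ x ∉ Set.Ioc a b, c x = 0) (hlo : lo ≤ a) (hhi : b ≤ hi) :
    ∑ t ∈ Ioc lo hi, mass c t = ∑ t ∈ Ioc a b, mass c t :=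
  (sum_subset (Ioc_subset_Ioc hlo hhi) fun t _ ht =>
    mass_of_eq_zero (hc t (by simpa using ht))).symm

theorem sum_mass_indicator (c : ℤ → Fin q) (a b lo hi : ℤ) :
    ∑ t ∈ Ioc lo hi, mass ((Set.Ioc a b).indicator c) t =
      ∑ t ∈ Ioc (max lo a) (min hi b), mass c t := by
  rw [← Ioc_inter_Ioc, ← sum_ite_mem]
  refine sum_congr rfl fun t _ => ?_
  by_cases ht : t ∈ Set.Ioc a b
  · rw [if_pos (by simpa using ht), mass, Set.indicator_of_mem ht, mass]
  · rw [if_neg (by simpa using ht), mass_of_eq_zero (Set.indicator_of_notMem ht c)]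

theorem netOutflow_eq_zero_of_le (hf : Conserves q n f) {c : ℤ → Fin q} {a b t : ℤ}
    (hc : ∀ x ∉ Set.Ioc a b, c x = 0) (ht : t + n ≤ a) : netOutflow f ℓ c t = 0 := by
  have hzero : globalMap f ℓ c t = 0 := by
    rw [globalMap_congr (c' := fun _ => 0) fun x hx => hc x fun hx' => by
      simp only [Set.mem_Ico, Set.mem_Ioc] at hx hx'; omega]
    exact hf.apply_zero
  rw [netOutflow, mass_of_eq_zero hzero, mass_of_eq_zero (hc t (by simp; omega)), sub_zero]

/-- Apply `Conserves` to a periodic configuration agreeing with `c` around `Ioc lo hi`. -/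
theorem sum_netOutflow_eq_zero (hf : Conserves q n f) (hℓ : ℓ < n) {c : ℤ → Fin q}
    {a b lo hi : ℤ} (hc : ∀ x ∉ Set.Ioc a b, c x = 0) (hab : a ≤ b) (hlo : lo + n ≤ a)
    (hhi : b + n ≤ hi) :
    ∑ t ∈ Ioc lo hi, netOutflow f ℓ c t = 0 := by
  obtain ⟨w, hw, hwc⟩ := Int.exists_periodic_eqOn hc hab (by omega) hlo hhi
  have hp : ((hi - lo).toNat : ℤ) = hi - lo := Int.toNat_of_nonneg (by omega)
  have hcons := hf (hi - lo).toNat (by omega) (fun x => w (lo + 1 - ℓ + x)) fun x => by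
    simp only [hp, ← add_assoc, hw _]
  have hout : ∑ t ∈ Ioc lo hi, mass (globalMap f ℓ c) t =
      ∑ k ∈ Finset.range (hi - lo).toNat, ((f fun t => w (lo + 1 - ℓ + (k + t)) : ℕ) : ℤ) := by
    rw [Int.sum_Ioc_eq_sum_range]
    refine sum_congr rfl fun k hk => ?_
    rw [mem_range] at hk
    rw [mass, globalMap_congr (c' := w) fun x hx => (hwc x (by
      simp only [Set.mem_Ico, Set.mem_Ioc] at hx ⊢; omega)).symm]
    simp only [globalMap, add_sub_right_comm, add_assoc]
  have hin : ∑ t ∈ Ioc lo hi, mass c t =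
      ∑ k ∈ Finset.range (hi - lo).toNat, ((w (lo + 1 - ℓ + k) : ℕ) : ℤ) := by
    rw [sum_mass_eq_of_support hc (by omega) (by omega),
      ← sum_mass_eq_of_support hc (by omega : lo - ℓ ≤ a) (by omega : b ≤ hi - ℓ),
      Int.sum_Ioc_eq_sum_range, show hi - ℓ - (lo - ℓ) = hi - lo by ring]
    refine sum_congr rfl fun k hk => ?_
    rw [mem_range] at hk
    rw [mass, ← hwc _ (by simp only [Set.mem_Ioc]; omega)]
    congr 3
    ring
  simp only [netOutflow]
  rw [sum_sub_distrib, hout, hin]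
  exact sub_eq_zero.2 hcons.symm

/-- The net number of particles crossing from cell `e` to cell `e + 1`: the balance of the
cells `≤ e` for the restriction of `c` to the cells `e - ℓ + 1, …, e - ℓ + n - 1`, which are
the ones read by both `e` and `e + 1`. -/
noncomputable def flow (f : (Fin n → Fin q) → Fin q) (ℓ : ℕ) (c : ℤ → Fin q) (e : ℤ) : ℤ :=
  ∑ t ∈ Ioc (e - 2 * n) e, netOutflow f ℓ ((Set.Ioc (e - ℓ) (e - ℓ + n - 1)).indicator c) t

theorem flow_eq_of_eqOn_add {c c' : ℤ → Fin q} {e s : ℤ}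
    (h : ∀ x ∈ Set.Ioc (e - ℓ) (e - ℓ + n - 1), c' x = c (s + x)) :
    flow f ℓ c' e = flow f ℓ c (s + e) := by
  have hw : (Set.Ioc (e - ℓ) (e - ℓ + n - 1)).indicator c' =
      fun x => (Set.Ioc (s + e - ℓ) (s + e - ℓ + n - 1)).indicator c (s + x) := by
    funext x
    by_cases hx : x ∈ Set.Ioc (e - ℓ) (e - ℓ + n - 1)
    · rw [Set.indicator_of_mem hx, Set.indicator_of_mem (by simp at hx ⊢; omega), h x hx]
    · rw [Set.indicator_of_notMem hx, Set.indicator_of_notMem (by simp at hx ⊢; omega)]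
  simp only [flow, hw, netOutflow_comp_add]
  rw [Int.sum_Ioc_comp_add (netOutflow f ℓ _), show s + (e - 2 * n) = s + e - 2 * n by ring]

theorem flow_congr {c c' : ℤ → Fin q} {e : ℤ}
    (h : ∀ x ∈ Set.Ioc (e - ℓ) (e - ℓ + n - 1), c' x = c x) : flow f ℓ c' e = flow f ℓ c e := by
  simpa using flow_eq_of_eqOn_add (s := 0) (by simpa using h)

theorem flow_le_sum_mass (hℓ : ℓ < n) (c : ℤ → Fin q) (e : ℤ) :
    flow f ℓ c e ≤ ∑ t ∈ Ioc (e - ℓ) e, mass c t := by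
  calc flow f ℓ c e
      ≤ ∑ t ∈ Ioc (e - 2 * n) e, mass ((Set.Ioc (e - ℓ) (e - ℓ + n - 1)).indicator c) t :=
        sum_le_sum fun t _ => sub_le_self _ (mass_nonneg _ _)
    _ = ∑ t ∈ Ioc (e - ℓ) e, mass c t := by
        rw [sum_mass_indicator, max_eq_right (by omega), min_eq_left (by omega)]

theorem neg_sum_mass_le_flow (hf : Conserves q n f) (hℓ : ℓ < n) (c : ℤ → Fin q) (e : ℤ) :
    -∑ t ∈ Ioc e (e - ℓ + n - 1), mass c t ≤ flow f ℓ c e := by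
  set cw := (Set.Ioc (e - ℓ) (e - ℓ + n - 1)).indicator c
  have hbalance := sum_netOutflow_eq_zero hf hℓ (c := cw) (a := e - n) (b := e + n)
    (lo := e - 2 * n) (hi := e + 2 * n)
    (fun x hx => Set.indicator_of_notMem (fun hx' => hx (by simp at hx' ⊢; omega)) c)
    (by omega) (by omega) (by omega)
  rw [← sum_Ioc_add_sum_Ioc _ (by omega : e - 2 * n ≤ e) (by omega : e ≤ e + 2 * n)] at hbalance
  have hright : ∑ t ∈ Ioc e (e + 2 * n), netOutflow f ℓ cw t ≤
      ∑ t ∈ Ioc e (e - ℓ + n - 1), mass c t := by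
    calc ∑ t ∈ Ioc e (e + 2 * n), netOutflow f ℓ cw t
        ≤ ∑ t ∈ Ioc e (e + 2 * n), mass cw t :=
          sum_le_sum fun t _ => sub_le_self _ (mass_nonneg _ _)
      _ = ∑ t ∈ Ioc e (e - ℓ + n - 1), mass c t := by
          rw [sum_mass_indicator, max_eq_left (by omega), min_eq_right (by omega)]
  rw [flow]
  linarith

/-- Cutting `c` off left of the window leaves the balance of the cells `> e` unchanged, cutting it
off right of the window leaves that of the cells `≤ e` unchanged, and conservation turns one
balance into the other. -/
theorem flow_eq_sum_netOutflow (hf : Conserves q n f) (hℓ : ℓ < n) {c : ℤ → Fin q} {a b lo e : ℤ}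
    (hc : ∀ x ∉ Set.Ioc a b, c x = 0) (hab : a ≤ b) (hlo : lo + n ≤ a) (hle : lo ≤ e) :
    flow f ℓ c e = ∑ t ∈ Ioc lo e, netOutflow f ℓ c t := by
  set cL := (Set.Ioi (e - ℓ)).indicator c
  set cw := (Set.Ioc (e - ℓ) (e - ℓ + n - 1)).indicator c
  set hi := max b e + n
  have hbalance : ∀ c' : ℤ → Fin q, (∀ x ∉ Set.Ioc a b, c' x = 0) →
      ∑ t ∈ Ioc lo e, netOutflow f ℓ c' t = -∑ t ∈ Ioc e hi, netOutflow f ℓ c' t :=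
    fun c' hc' => eq_neg_of_add_eq_zero_left <| by
      rw [sum_Ioc_add_sum_Ioc _ hle (by omega)]
      exact sum_netOutflow_eq_zero hf hℓ hc' hab hlo (by omega)
  have hcL : ∀ x ∉ Set.Ioc a b, cL x = 0 := fun x hx => by simp [cL, Set.indicator_apply, hc x hx]
  have hright : ∑ t ∈ Ioc e hi, netOutflow f ℓ c t = ∑ t ∈ Ioc e hi, netOutflow f ℓ cL t :=
    sum_congr rfl fun t ht => netOutflow_congr hℓ fun x hx =>
      (Set.indicator_of_mem (by simp at ht hx ⊢; omega) c).symm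
  have hleft : ∑ t ∈ Ioc lo e, netOutflow f ℓ cL t = ∑ t ∈ Ioc lo e, netOutflow f ℓ cw t :=
    sum_congr rfl fun t ht => netOutflow_congr hℓ fun x hx => by
      simp only [mem_Ioc, Set.mem_Ico] at ht hx
      simp only [cL, cw, Set.indicator_apply, Set.mem_Ioi, Set.mem_Ioc]
      split_ifs <;> first | rfl | omega
  have hvanish : ∀ t ≤ max lo (e - 2 * n), netOutflow f ℓ cw t = 0 := fun t ht => by
    rcases le_max_iff.1 ht with ht | ht
    · exact netOutflow_eq_zero_of_le hf (a := a) (b := b)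
        (fun x hx => by simp [cw, Set.indicator_apply, hc x hx]) (by omega)
    · exact netOutflow_eq_zero_of_le hf (a := e - n) (b := e + n)
        (fun x hx => Set.indicator_of_notMem (fun hx' => hx (by simp at hx' ⊢; omega)) c)
        (by omega)
  rw [hbalance c hc, hright, ← hbalance cL hcL, hleft, flow,
    Int.sum_Ioc_eq_sum_Ioc_of_eq_zero hvanish (le_max_left _ _),
    Int.sum_Ioc_eq_sum_Ioc_of_eq_zero hvanish (le_max_right _ _)]

/-- The number of particles of `globalMap f ℓ c` in the cells `≤ e`, up to the same additive
constant as `cumMass c e`. -/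
noncomputable def cumOut (f : (Fin n → Fin q) → Fin q) (ℓ : ℕ) (c : ℤ → Fin q) (e : ℤ) : ℤ :=
  cumMass c e - flow f ℓ c e

theorem cumOut_sub_cumOut_sub_one (hf : Conserves q n f) (hℓ : ℓ < n) (c : ℤ → Fin q) (e : ℤ) :
    cumOut f ℓ c e - cumOut f ℓ c (e - 1) = mass (globalMap f ℓ c) e := by
  set ĉ := (Set.Ioc (e - ℓ - 1) (e - ℓ + n - 1)).indicator c
  have hĉ : ∀ x ∈ Set.Ioc (e - ℓ - 1) (e - ℓ + n - 1), ĉ x = c x :=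
    fun x hx => Set.indicator_of_mem hx c
  have hsupp : ∀ x ∉ Set.Ioc (e - ℓ - 1) (e - ℓ + n - 1), ĉ x = 0 :=
    fun x hx => Set.indicator_of_notMem hx c
  have h₁ : flow f ℓ c (e - 1) = ∑ t ∈ Ioc (e - ℓ - 1 - n) (e - 1), netOutflow f ℓ ĉ t := by
    rw [← flow_congr (c' := ĉ) fun x hx => hĉ x (by simp at hx ⊢; omega)]
    exact flow_eq_sum_netOutflow hf hℓ hsupp (by omega) (by omega) (by omega)
  have h₂ : flow f ℓ c e = ∑ t ∈ Ioc (e - ℓ - 1 - n) e, netOutflow f ℓ ĉ t := by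
    rw [← flow_congr (c' := ĉ) fun x hx => hĉ x (by simp at hx ⊢; omega)]
    exact flow_eq_sum_netOutflow hf hℓ hsupp (by omega) (by omega) (by omega)
  have h₃ : netOutflow f ℓ ĉ e = mass c e - mass (globalMap f ℓ c) e :=
    netOutflow_congr hℓ fun x hx => hĉ x (by simp at hx ⊢; omega)
  have h₄ := cumMass_sub_one_add_mass c e
  rw [← Int.sum_Ioc_sub_one_add _ (by omega : e - ℓ - 1 - n < e), h₃, ← h₁] at h₂
  rw [cumOut, cumOut, h₂]
  linarith

theorem monotone_cumOut (hf : Conserves q n f) (hℓ : ℓ < n) (c : ℤ → Fin q) :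
    Monotone (cumOut f ℓ c) := monotone_int_of_le_succ fun e => by
  have := cumOut_sub_cumOut_sub_one hf hℓ c (e + 1)
  rw [add_sub_cancel_right] at this
  linarith [mass_nonneg (globalMap f ℓ c) (e + 1)]

theorem cumMass_le_cumOut (hℓ : ℓ < n) (c : ℤ → Fin q) (e : ℤ) :
    cumMass c (e - ℓ) ≤ cumOut f ℓ c e := by
  have := flow_le_sum_mass (f := f) hℓ c e
  rw [← cumSum_sub_cumSum (by omega)] at this
  rw [cumOut, cumMass]
  linarith

theorem cumOut_le_cumMass (hf : Conserves q n f) (hℓ : ℓ < n) (c : ℤ → Fin q) (e : ℤ) :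
    cumOut f ℓ c e ≤ cumMass c (e - ℓ + n - 1) := by
  have := neg_sum_mass_le_flow hf hℓ c e
  rw [← cumSum_sub_cumSum (by omega)] at this
  rw [cumOut, cumMass]
  linarith

theorem cumOut_sub_cumMass_of_eqOn_add {c c' : ℤ → Fin q} {a e s : ℤ}
    (h₁ : ∀ x ∈ Set.uIoc a e, c' x = c (s + x))
    (h₂ : ∀ x ∈ Set.Ioc (e - ℓ) (e - ℓ + n - 1), c' x = c (s + x)) :
    cumOut f ℓ c' e - cumMass c' a = cumOut f ℓ c (s + e) - cumMass c (s + a) := by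
  have := cumSum_sub_cumSum_of_eqOn_add (g := mass c) (g' := mass c') fun x hx => by
    rw [mass, mass, h₁ x hx]
  rw [cumOut, cumOut, flow_eq_of_eqOn_add h₂, cumMass, cumMass]
  linarith

noncomputable def dest (f : (Fin n → Fin q) → Fin q) (ℓ : ℕ) (c : ℤ → Fin q) (j : ℤ) (k : ℕ) :
    ℤ :=
  sInf {d | label c j k < cumOut f ℓ c (j + d)}

theorem monotone_cumOut_add (hf : Conserves q n f) (hℓ : ℓ < n) (c : ℤ → Fin q) (j : ℤ) :
    Monotone fun d => cumOut f ℓ c (j + d) := fun _ _ h =>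
  monotone_cumOut hf hℓ c (add_le_add_right h j)

theorem cumOut_le_label (hf : Conserves q n f) (hℓ : ℓ < n) (c : ℤ → Fin q) (j : ℤ) (k : ℕ) :
    cumOut f ℓ c (j + (ℓ - n)) ≤ label c j k := by
  have := cumOut_le_cumMass hf hℓ c (j + (ℓ - n))
  rw [show j + (ℓ - n) - ℓ + n - 1 = j - 1 by ring] at this
  rw [label]
  omega

theorem label_lt_cumOut (hℓ : ℓ < n) {c : ℤ → Fin q} {j : ℤ} {k : ℕ} (hk : k < (c j : ℕ)) :
    label c j k < cumOut f ℓ c (j + ℓ) := by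
  have h₁ := cumMass_le_cumOut (f := f) hℓ c (j + ℓ)
  have h₂ := cumMass_sub_one_add_mass c j
  rw [add_sub_cancel_right] at h₁
  rw [mass] at h₂
  rw [label]
  omega

theorem dest_eq_iff (hf : Conserves q n f) (hℓ : ℓ < n) {c : ℤ → Fin q} {j : ℤ} {k : ℕ}
    (hk : k < (c j : ℕ)) {d : ℤ} :
    dest f ℓ c j k = d ↔
      cumOut f ℓ c (j + d - 1) ≤ label c j k ∧ label c j k < cumOut f ℓ c (j + d) := by
  rw [dest, (monotone_cumOut_add hf hℓ c j).sInf_setOf_lt_eq_iff (cumOut_le_label hf hℓ c j k)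
    (label_lt_cumOut hℓ hk), add_sub_assoc]

theorem dest_mem_Ioc (hf : Conserves q n f) (hℓ : ℓ < n) {c : ℤ → Fin q} {j : ℤ} {k : ℕ}
    (hk : k < (c j : ℕ)) :
    dest f ℓ c j k ∈ Set.Ioc ((ℓ : ℤ) - n) ℓ := by
  obtain ⟨h₁, h₂⟩ := (dest_eq_iff hf hℓ hk).1 rfl
  have := (monotone_cumOut hf hℓ c).reflect_lt ((cumOut_le_label hf hℓ c j k).trans_lt h₂)
  have := (monotone_cumOut hf hℓ c).reflect_lt (h₁.trans_lt (label_lt_cumOut hℓ hk))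
  constructor <;> omega

/-- The configuration seen by a cell in state `v` with context `(u, u')`, placed at the origin
and extended by `0`. -/
def context {L R : ℕ} (v : Fin q) (u : Fin L → Fin q) (u' : Fin R → Fin q) (x : ℤ) : Fin q :=
  if h : -(L : ℤ) ≤ x ∧ x < 0 then u ⟨(x + L).toNat, by omega⟩
  else if x = 0 then v
  else if h' : 0 < x ∧ x ≤ R then u' ⟨(x - 1).toNat, by omega⟩
  else 0

theorem context_zero {L R : ℕ} (v : Fin q) (u : Fin L → Fin q) (u' : Fin R → Fin q) :
    context v u u' 0 = v := by
  simp [context]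

theorem context_eq {L R : ℕ} (c : ℤ → Fin q) (j : ℤ) {x : ℤ} (h₁ : -(L : ℤ) ≤ x)
    (h₂ : x ≤ R) :
    context (c j) (fun t : Fin L => c (j - (L : ℤ) + ((t : ℕ) : ℤ)))
      (fun t : Fin R => c (j + 1 + ((t : ℕ) : ℤ))) x = c (j + x) := by
  unfold context
  split_ifs <;> first | omega | (congr 1; omega) | (dsimp only; congr 1; omega)

theorem dest_context (hf : Conserves q n f) (hℓ : ℓ < n) (c : ℤ → Fin q) (j : ℤ) {k : ℕ}
    (hk : k < (c j : ℕ)) :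
    dest f ℓ (context (c j) (fun t : Fin n => c (j - (n : ℤ) + ((t : ℕ) : ℤ)))
      (fun t : Fin n => c (j + 1 + ((t : ℕ) : ℤ)))) 0 k = dest f ℓ c j k := by
  set ĉ := context (c j) (fun t : Fin n => c (j - (n : ℤ) + ((t : ℕ) : ℤ)))
      (fun t : Fin n => c (j + 1 + ((t : ℕ) : ℤ)))
  have hĉ : ∀ x, -(n : ℤ) ≤ x → x ≤ n → ĉ x = c (j + x) := fun x h₁ h₂ => context_eq c j h₁ h₂
  have hk' : k < (ĉ 0 : ℕ) := by rwa [hĉ 0 (by omega) (by omega), add_zero]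
  unfold dest
  congr 1
  refine (monotone_cumOut_add hf hℓ ĉ 0).setOf_lt_eq_of_eqOn (monotone_cumOut_add hf hℓ c j)
    (fun d ⟨hd₁, hd₂⟩ => ?_) (cumOut_le_label hf hℓ ĉ 0 k) (label_lt_cumOut hℓ hk')
  have := cumOut_sub_cumMass_of_eqOn_add (f := f) (ℓ := ℓ) (a := -1) (e := d) (s := j)
    (fun x hx => hĉ x (by rw [Set.mem_uIoc] at hx; omega) (by rw [Set.mem_uIoc] at hx; omega))
    (fun x hx => hĉ x (by simp at hx; omega) (by simp at hx; omega))
  rw [← sub_eq_add_neg] at this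
  rw [label, label, zero_add, zero_sub]
  linarith

noncomputable def particleAutomaton (hf : Conserves q n f) (hℓ : ℓ < n) : PA q n n where
  g v u u' k := some (dest f ℓ (context v u u') 0 k)
  mem_range v u u' k d hd := by
    obtain ⟨h₁, h₂⟩ := dest_mem_Ioc hf hℓ (c := context v u u') (j := 0) (k := k)
      (by rw [context_zero]; exact k.isLt)
    rw [Option.some_inj] at hd
    omega

theorem particleAutomaton_g_eq_some_iff (hf : Conserves q n f) (hℓ : ℓ < n) (c : ℤ → Fin q)
    {j d : ℤ} (k : Fin (c j : ℕ)) :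
    (particleAutomaton hf hℓ).g (c j) (fun t => c (j - (n : ℤ) + ((t : ℕ) : ℤ)))
        (fun t => c (j + 1 + ((t : ℕ) : ℤ))) k = some d ↔
      cumOut f ℓ c (j + d - 1) ≤ label c j k ∧ label c j k < cumOut f ℓ c (j + d) := by
  rw [← dest_eq_iff hf hℓ k.isLt, ← dest_context hf hℓ c j k.isLt]
  exact Option.some_inj

theorem count_particleAutomaton (hf : Conserves q n f) (hℓ : ℓ < n) (c : ℤ → Fin q)
    (j i : ℤ) :
    (particleAutomaton hf hℓ).count c j i =
      #(Ico (cumMass c (j - 1)) (cumMass c j) ∩ Ico (cumOut f ℓ c (i - 1)) (cumOut f ℓ c i)) := by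
  rw [← cumMass_sub_one_add_mass c j, mass, ← card_filter_fin_add_mem, PA.count]
  refine congrArg card (filter_congr fun k _ => ?_)
  rw [particleAutomaton_g_eq_some_iff hf hℓ, add_sub_cancel, mem_Ico]
  rfl

theorem finsum_count_particleAutomaton (hf : Conserves q n f) (hℓ : ℓ < n) (c : ℤ → Fin q)
    (i : ℤ) : ∑ᶠ j, (particleAutomaton hf hℓ).count c j i = (globalMap f ℓ c i : ℕ) := by
  have hV := monotone_cumMass c
  have hlo : cumMass c (i - ℓ - 1) ≤ cumOut f ℓ c (i - 1) := by
    simpa only [sub_right_comm] using cumMass_le_cumOut (f := f) hℓ c (i - 1)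
  have hhi := cumOut_le_cumMass hf hℓ c i
  rw [finsum_eq_sum_of_support_subset _ (s := Ioc (i - ℓ - 1) (i - ℓ + n - 1)) fun j hj => ?_]
  · simp only [count_particleAutomaton hf hℓ]
    rw [sum_card_Ico_inter hV _ (by omega), inter_eq_right.2 (Ico_subset_Ico hlo hhi),
      Int.card_Ico, cumOut_sub_cumOut_sub_one hf hℓ, mass, Int.toNat_natCast]
  · rw [Function.mem_support, count_particleAutomaton hf hℓ, Ne, card_eq_zero,
      ← disjoint_iff_inter_eq_empty] at hj
    by_contra hj'
    refine hj (disjoint_left.2 fun x hx hx' => ?_)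
    simp only [coe_Ioc, Set.mem_Ioc, not_and_or, not_lt, not_le, mem_Ico] at hj' hx hx'
    rcases hj' with hj' | hj'
    · have := hV (show j ≤ i - ℓ - 1 by omega)
      omega
    · have := hV (show i - ℓ + n - 1 ≤ j - 1 by omega)
      omega

end CA

open CA

/-- every conservative CA is the global map of a conservative particle
automaton that preserves the order of the particles: no particle jumps over, or onto the
source of, another moving particle in the opposite relative order. -/
theorem order_preserving_particle_representation
    (q n : ℕ) [NeZero q] (hn : 1 ≤ n)
    (f : (Fin n → Fin q) → Fin q) (hf : Conserves q n f)
    (ℓ : ℕ) (hℓ : ℓ ≤ n - 1)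
    (F : (ℤ → Fin q) → ℤ → Fin q)
    (hF : ∀ (c : ℤ → Fin q) (i : ℤ),
      F c i = f (fun t => c (i - (ℓ : ℤ) + ((t : ℕ) : ℤ)))) :
    ∃ (L R : ℕ) (G : PA q L R),
      G.Conservative ∧
      (∀ (c : ℤ → Fin q) (i : ℤ), G.glob c i = F c i) ∧
      ¬ ∃ (c : ℤ → Fin q) (i₀ j₀ : ℤ) (k : Fin ((c i₀ : ℕ))) (k' : Fin ((c j₀ : ℕ)))
          (d d' : ℤ),
          i₀ ≠ j₀ ∧
          G.g (c i₀) (fun t => c (i₀ - (L : ℤ) + ((t : ℕ) : ℤ)))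
            (fun t => c (i₀ + 1 + ((t : ℕ) : ℤ))) k = some d ∧
          G.g (c j₀) (fun t => c (j₀ - (L : ℤ) + ((t : ℕ) : ℤ)))
            (fun t => c (j₀ + 1 + ((t : ℕ) : ℤ))) k' = some d' ∧
          ((i₀ < j₀ ∧ j₀ ≤ j₀ + d' ∧ j₀ + d' < i₀ + d) ∨
           (i₀ + d < j₀ + d' ∧ j₀ + d' ≤ j₀ ∧ j₀ < i₀)) := by
  have hℓn : ℓ < n := by omega
  obtain rfl : F = globalMap f ℓ := funext₂ hF
  refine ⟨n, n, particleAutomaton hf hℓn, ⟨fun _ _ _ _ => Option.some_ne_none _, fun c i => ?_⟩,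
    fun c i => Fin.ext ?_, ?_⟩
  · rw [finsum_count_particleAutomaton hf hℓn]
    exact Nat.le_sub_one_of_lt (globalMap f ℓ c i).isLt
  · show min (q - 1) (∑ᶠ j, (particleAutomaton hf hℓn).count c j i) = _
    rw [finsum_count_particleAutomaton hf hℓn]
    exact min_eq_right (Nat.le_sub_one_of_lt (globalMap f ℓ c i).isLt)
  · rintro ⟨c, i₀, j₀, k, k', d, d', -, hk, hk', hcross⟩
    rw [particleAutomaton_g_eq_some_iff] at hk hk'
    have hmono := monotone_cumOut hf hℓn c
    rcases hcross with ⟨hij, -, hlt⟩ | ⟨hlt, -, hji⟩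
    · have := hmono.reflect_lt (hk.1.trans_lt ((label_lt_label c hij k.isLt k').trans hk'.2))
      omega
    · have := hmono.reflect_lt (hk'.1.trans_lt ((label_lt_label c hji k'.isLt k).trans hk.2))
      omega
end

section
/- There exists a conservative local rule f ∈ CA^0(2,5) (with states Q = {0,1}) such that for every offset 0 ≤ ℓ ≤ 4 and every particle automaton G whose global map equals the CA F(c)_i = f(c_{i−ℓ},…,c_{i+4−ℓ}), the PA G exhibits anticipation: there exist a configuration c ∈ Q^ℤ and positions i ≠ j with c_i = 1, c_j = 1, such that some entry of g_{c_j}(c_{j−L},…,c_{j−1}, c_{j+1},…,c_{j+R}) equals i − j (a particle moves onto an occupied cell). -/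
/-!
The rule is `x₂ + J(x₀,x₁,x₂,x₃) − J(x₁,x₂,x₃,x₄)` for a flux `J`, so its sum over a period
telescopes to the number of ones.

Let a PA realize the rule with offset `ℓ`. Every one of `G(c)` receives a particle and every one
of `c` emits exactly one, so the source map from the ones of `G(c)` to the ones of `c` is
injective; if `G(c)` has at least as many ones as `c`, it is onto, and every particle of `c` lands
on a one of `G(c)`. On a long block `[0, N]` the CA shifts the block by `ℓ − 2`; for `ℓ ≠ 2` the
rear particle has bounded range, so it lands inside the block, on an occupied cell other than its
own. For `ℓ = 2` the block is fixed, but `1010…101` on `[0, 2M]` is mapped to the ones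
`2, 4, …, 2M, 2M + 1`, so the particle at `0` lands on one of the occupied cells `2, …, 2M`.
-/

open Finset Function

def flux : Fin 2 → Fin 2 → Fin 2 → Fin 2 → ℤ
  | 0, 1, 0, _ => 1
  | 1, 0, 1, 0 => 1
  | 1, 1, 0, 1 => 1
  | _, _, _, _ => 0

-- `flux x₀ x₁ x₂ x₃` is the flow across the edge between `x₁` and `x₂`. `Fin.ofNat` would reduce
-- mod 2, but by `rule_eq_add_flux_sub_flux` the integer is already `0` or `1`.
def rule (v : Fin 5 → Fin 2) : Fin 2 :=
  Fin.ofNat 2 (v 2 + flux (v 0) (v 1) (v 2) (v 3) - flux (v 1) (v 2) (v 3) (v 4)).toNat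

theorem rule_eq_add_flux_sub_flux (v : Fin 5 → Fin 2) :
    (rule v : ℤ) = v 2 + flux (v 0) (v 1) (v 2) (v 3) - flux (v 1) (v 2) (v 3) (v 4) := by
  have h : ∀ a b c d e : Fin 2, ((Fin.ofNat 2 ((c : ℤ) + flux a b c d - flux b c d e).toNat :
      Fin 2) : ℤ) = c + flux a b c d - flux b c d e := by
    decide
  exact h _ _ _ _ _

theorem Function.Periodic.sum_range_comp_add_one {M : Type*} [AddCancelCommMonoid M]
    {u : ℤ → M} {p : ℕ} (h : Periodic u p) : ∑ k ∈ range p, u (k + 1) = ∑ k ∈ range p, u k := by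
  have := sum_range_succ (fun k : ℕ => u k) p
  rw [sum_range_succ', Nat.cast_zero, ← zero_add (p : ℤ), h 0] at this
  push_cast at this
  exact add_right_cancel this

theorem Function.Periodic.sum_range_comp_add_nat {M : Type*} [AddCancelCommMonoid M]
    {u : ℤ → M} {p : ℕ} (h : Periodic u p) (m : ℕ) :
    ∑ k ∈ range p, u (k + m) = ∑ k ∈ range p, u k := by
  induction m with
  | zero => simp
  | succ m ih =>
    rw [← ih, ← (h.add_const (m : ℤ)).sum_range_comp_add_one]
    push_cast
    simp only [add_assoc, add_comm (1 : ℤ)]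

theorem rule_conserves : Conserves 2 5 rule := by
  intro p _ w (hw : Periodic w p)
  set J : ℤ → ℤ := fun x => flux (w x) (w (x + 1)) (w (x + 2)) (w (x + 3))
  have hJ : Periodic J p := fun x => by simp only [J, add_right_comm _ (p : ℤ), hw _]
  have hrule (k : ℤ) : (rule (fun t => w (k + (t : ℕ))) : ℤ) = w (k + 2) + J k - J (k + 1) := by
    rw [rule_eq_add_flux_sub_flux]
    simp [J, add_assoc]
  simp only [hrule, sum_sub_distrib, sum_add_distrib, hJ.sum_range_comp_add_one]
  rw [add_sub_cancel_right]
  have hw' : Periodic (fun x => (w x : ℤ)) p := hw.comp fun a : Fin 2 => (a : ℤ)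
  exact_mod_cast hw'.sum_range_comp_add_nat 2

namespace PA

variable {q L R : ℕ}

def Sends (A : PA q L R) (c : ℤ → Fin q) (j i : ℤ) : Prop :=
  ∃ k : Fin (c j : ℕ), A.g (c j) (fun t => c (j - (L : ℤ) + ((t : ℕ) : ℤ)))
    (fun t => c (j + 1 + ((t : ℕ) : ℤ))) k = some (i - j)

def Anticipates (A : PA 2 L R) : Prop :=
  ∃ (c : ℤ → Fin 2) (i j : ℤ), i ≠ j ∧ c i = 1 ∧ c j = 1 ∧ A.Sends c j i

def Realizes [NeZero q] {n : ℕ} (A : PA q L R) (f : (Fin n → Fin q) → Fin q) (ℓ : ℤ) : Prop :=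
  ∀ (c : ℤ → Fin q) (i : ℤ), A.glob c i = f (fun t => c (i - ℓ + ((t : ℕ) : ℤ)))

theorem count_ne_zero_iff (A : PA q L R) (c : ℤ → Fin q) (j i : ℤ) :
    A.count c j i ≠ 0 ↔ A.Sends c j i := by
  simp [count, Sends]

theorem Sends.mem_range {A : PA q L R} {c : ℤ → Fin q} {j i : ℤ} (h : A.Sends c j i) :
    -(L : ℤ) ≤ i - j ∧ i - j ≤ R :=
  let ⟨k, hk⟩ := h
  A.mem_range _ _ _ k _ hk

theorem exists_sends_of_glob_ne_zero [NeZero q] (A : PA q L R) {c : ℤ → Fin q} {i : ℤ}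
    (h : A.glob c i ≠ 0) : ∃ j, A.Sends c j i := by
  by_contra! hnone
  refine h (Fin.ext ?_)
  simp only [glob, Fin.val_zero, Nat.min_eq_zero_iff]
  right
  exact finsum_eq_zero_of_forall_eq_zero fun j =>
    not_not.mp (mt (A.count_ne_zero_iff c j i).mp (hnone j))

section Binary

variable {G : PA 2 L R} {c : ℤ → Fin 2}

theorem Sends.source_eq_one {j i : ℤ} (h : G.Sends c j i) : c j = 1 := by
  obtain ⟨k, -⟩ := h
  have := k.pos
  omega

theorem Sends.target_unique {j i i' : ℤ} (h : G.Sends c j i) (h' : G.Sends c j i') : i = i' := by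
  obtain ⟨k, hk⟩ := h
  obtain ⟨k', hk'⟩ := h'
  have : k = k' := Fin.ext (by omega)
  subst this
  have := Option.some.inj (hk.symm.trans hk')
  omega

theorem forall_sends_of_card_le {X S : Finset ℤ} (hX : ∀ x, c x = 1 ↔ x ∈ X)
    (hS : ∀ i ∈ S, G.glob c i = 1) (hcard : #X ≤ #S) : ∀ x ∈ X, ∃ i ∈ S, G.Sends c x i := by
  have hsrc : ∀ i ∈ S, ∃ j, G.Sends c j i := fun i hi =>
    G.exists_sends_of_glob_ne_zero (by rw [hS i hi]; decide)
  choose! src hsrc using hsrc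
  have hmaps : Set.MapsTo src S X := fun i hi => (hX _).mp (hsrc i hi).source_eq_one
  have hinj : Set.InjOn src S := fun i₁ h₁ i₂ h₂ h =>
    (hsrc i₁ h₁).target_unique (h ▸ hsrc i₂ h₂)
  intro x hx
  obtain ⟨i, hi, rfl⟩ := surjOn_of_injOn_of_card_le src hmaps hinj hcard hx
  exact ⟨i, hi, hsrc i hi⟩

theorem anticipates_of_injOn {X : Finset ℤ} (hX : ∀ x, c x = 1 ↔ x ∈ X) {σ : ℤ → ℤ}
    (hσ : Set.InjOn σ X) (hglob : ∀ x ∈ X, G.glob c (σ x) = 1) {x₀ : ℤ} (hx₀ : x₀ ∈ X)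
    (hnear : ∀ x ∈ X, -(L : ℤ) ≤ σ x - x₀ → σ x - x₀ ≤ R → σ x ∈ X ∧ σ x ≠ x₀) :
    G.Anticipates := by
  classical
  have hS : ∀ i ∈ X.image σ, G.glob c i = 1 := by
    simpa only [mem_image, forall_exists_index, and_imp, forall_apply_eq_imp_iff₂] using hglob
  obtain ⟨i, hi, hsend⟩ :=
    forall_sends_of_card_le hX hS (card_image_of_injOn hσ).ge x₀ hx₀
  obtain ⟨x, hx, rfl⟩ := mem_image.mp hi
  obtain ⟨hxX, hne⟩ := hnear x hx hsend.mem_range.1 hsend.mem_range.2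
  exact ⟨c, σ x, x₀, hne, (hX _).mpr hxX, (hX _).mpr hx₀, hsend⟩

end Binary

end PA

def occupancy (X : Finset ℤ) (x : ℤ) : Fin 2 := if x ∈ X then 1 else 0

theorem occupancy_eq_one_iff {X : Finset ℤ} {x : ℤ} : occupancy X x = 1 ↔ x ∈ X := by
  simp [occupancy]

theorem rule_occupancy_Icc {N w : ℤ} (hN : 1 ≤ N) (hw : -2 ≤ w ∧ w ≤ N - 2) :
    rule (fun t => occupancy (Icc 0 N) (w + ((t : ℕ) : ℤ))) = 1 := by
  simp only [rule, occupancy, mem_Icc]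
  split_ifs <;> first | rfl | omega

theorem rule_occupancy_even {M w : ℤ} (hM : 0 ≤ M)
    (hw : (0 ≤ w ∧ w ≤ 2 * M - 2 ∧ Even w) ∨ w = 2 * M - 1) :
    rule (fun t => occupancy ((Icc 0 (2 * M)).filter Even) (w + ((t : ℕ) : ℤ))) = 1 := by
  simp only [rule, occupancy, mem_filter, mem_Icc, Int.even_iff] at hw ⊢
  split_ifs <;> first | rfl | omega

namespace PA.Realizes

variable {L R : ℕ} {G : PA 2 L R}

theorem anticipates_of_ne_two {ℓ : ℤ} (hG : G.Realizes rule ℓ) (hℓ : ℓ ≠ 2) :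
    G.Anticipates := by
  set N : ℤ := L + R + 1
  have hσ : Set.InjOn (· + (ℓ - 2)) (Icc 0 N : Set ℤ) := (add_left_injective _).injOn
  have hglob : ∀ x ∈ Icc 0 N, G.glob (occupancy (Icc 0 N)) (x + (ℓ - 2)) = 1 := fun x hx => by
    rw [hG]
    exact rule_occupancy_Icc (by omega) (by rw [mem_Icc] at hx; omega)
  rcases hℓ.lt_or_gt with hlt | hgt
  · refine anticipates_of_injOn (fun _ => occupancy_eq_one_iff) hσ hglob (x₀ := N)
      (by simp only [mem_Icc]; omega) fun x hx _ _ => ?_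
    simp only [mem_Icc] at hx ⊢
    omega
  · refine anticipates_of_injOn (fun _ => occupancy_eq_one_iff) hσ hglob (x₀ := 0)
      (by simp only [mem_Icc]; omega) fun x hx _ _ => ?_
    simp only [mem_Icc] at hx ⊢
    omega

theorem anticipates_of_eq_two (hG : G.Realizes rule 2) : G.Anticipates := by
  set M : ℤ := R + 1
  set X : Finset ℤ := (Icc 0 (2 * M)).filter Even
  set σ : ℤ → ℤ := fun x => if x = 2 * M then 2 * M + 1 else x + 2
  have hσ : Set.InjOn σ X := fun x hx y hy h => by
    simp only [X, mem_coe, mem_filter, mem_Icc, Int.even_iff] at hx hy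
    simp only [σ] at h
    split_ifs at h <;> omega
  have hglob : ∀ x ∈ X, G.glob (occupancy X) (σ x) = 1 := fun x hx => by
    rw [hG]
    simp only [X, mem_filter, mem_Icc, Int.even_iff] at hx
    refine rule_occupancy_even (by omega) ?_
    simp only [σ, Int.even_iff]
    split_ifs <;> omega
  refine anticipates_of_injOn (fun _ => occupancy_eq_one_iff) hσ hglob (x₀ := 0)
    (by simp only [X, mem_filter, mem_Icc, Int.even_iff]; omega) fun x hx _ hR => ?_
  simp only [X, σ, mem_filter, mem_Icc, Int.even_iff] at hx hR ⊢
  split_ifs <;> omega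

end PA.Realizes

/-- there exists a conservative rule in `CA^0(2,5)` for which anticipation
is intrinsic: for every offset `ℓ ∈ {0,…,4}`, every particle automaton whose global map
is the corresponding CA sends, on some configuration, a particle onto an occupied cell. -/
theorem exists_intrinsically_anticipating_rule :
    ∃ f : (Fin 5 → Fin 2) → Fin 2, Conserves 2 5 f ∧
      ∀ ℓ : ℕ, ℓ ≤ 4 →
        ∀ (L R : ℕ) (G : PA 2 L R),
          (∀ (c : ℤ → Fin 2) (i : ℤ),
            G.glob c i = f (fun t => c (i - (ℓ : ℤ) + ((t : ℕ) : ℤ)))) →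
          ∃ (c : ℤ → Fin 2) (i j : ℤ), i ≠ j ∧ c i = 1 ∧ c j = 1 ∧
            ∃ k : Fin ((c j : ℕ)),
              G.g (c j) (fun t => c (j - (L : ℤ) + ((t : ℕ) : ℤ)))
                (fun t => c (j + 1 + ((t : ℕ) : ℤ))) k = some (i - j) := by
  refine ⟨rule, rule_conserves, fun ℓ _ L R G hG => ?_⟩
  change G.Realizes rule ℓ at hG
  rcases eq_or_ne (ℓ : ℤ) 2 with h | h
  · exact (h ▸ hG).anticipates_of_eq_two
  · exact hG.anticipates_of_ne_two h
end

section
/- Let Q = {0,…,q−1} with q ≥ 2, let f : Q^n → Q be conservative (f ∈ CA^0(q,n)), let 0 ≤ ℓ ≤ n−1, r = n−1−ℓ, and let F : Q^ℤ → Q^ℤ be the CA F(c)_i = f(c_{i−ℓ},…,c_{i+r}). Suppose there exists a non-anticipating particle automaton G whose global map equals F, i.e. a PA such that for every configuration c ∈ Q^ℤ and every cell i, the number of particles arriving at i from cells j ≠ i is at most q − 1 − c_i. Then the offset satisfies ℓ·(q−1) = ∑_{i=1}^{n−1} f(0^i, (q−1)^{n−i}), where 0^i denotes i consecutive zeros and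 (q−1)^{n−i} denotes n−i consecutive copies of q−1. -/
/-!
Run the PA on the periodic configuration `((q−1)^{2B} 0^{2B})^∞` with `B` large.
Non-anticipation bounds the arrivals at every cell by `q − 1`, so the PA never caps and its
arrivals are given by `f`. As `f` is conservative, arrivals and departures balance over a period,
hence no particle vanishes. A cell in state `q − 1` receives nothing from other cells, so no
particle crosses the boundary of the block `[-B, B)` around the interface `0^{2B} | (q−1)^{2B}`
at `0`, and the image of the block has mass `B(q−1)`. Computing that image through `f` gives
`(B − ℓ)(q−1) + ∑_{i=1}^{n−1} f(0^i (q−1)^{n−i})`.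
-/

open Finset

theorem Function.Periodic.sum_range_comp_add {M : Type*} [AddCancelCommMonoid M] {g : ℤ → M}
    {p : ℕ} (hg : Function.Periodic g p) (s : ℤ) :
    ∑ k ∈ range p, g (s + k) = ∑ k ∈ range p, g k := by
  have hstep (s : ℤ) : ∑ k ∈ range p, g (s + 1 + k) = ∑ k ∈ range p, g (s + k) := by
    have h := (sum_range_succ' (fun k : ℕ => g (s + k)) p).symm.trans (sum_range_succ _ p)
    simp only [Nat.cast_zero, add_zero, Nat.cast_succ, hg s, ← add_assoc] at h
    simpa only [add_right_comm s] using add_right_cancel h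
  induction s using Int.induction_on with
  | zero => simp
  | succ i ih => rw [hstep, ih]
  | pred i ih => rw [← ih, ← hstep]; simp

namespace PA

variable {q L R : ℕ} (A : PA q L R) (c : ℤ → Fin q)

def emit (j : ℤ) : Fin (c j : ℕ) → Option ℤ :=
  A.g (c j) (fun t => c (j - L + (t : ℕ))) (fun t => c (j + 1 + (t : ℕ)))

noncomputable def arrivals (i : ℤ) : ℕ := ∑ᶠ j, A.count c j i

noncomputable def departures (j : ℤ) : ℕ := ∑ᶠ i, A.count c j i

def vanishing (j : ℤ) : ℕ := #{k | A.emit c j k = none}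

def NonAnticipating : Prop :=
  ∀ (c : ℤ → Fin q) (i : ℤ),
    (∑ᶠ j : ℤ, if j = i then 0 else A.count c j i) ≤ q - 1 - (c i : ℕ)

theorem count_eq (j i : ℤ) : A.count c j i = #{k | A.emit c j k = some (i - j)} := rfl

theorem emit_mem_Icc {j : ℤ} {k} {d : ℤ} (h : A.emit c j k = some d) :
    d ∈ Icc (-(L : ℤ)) R :=
  mem_Icc.2 (A.mem_range _ _ _ _ _ h)

theorem count_le (j i : ℤ) : A.count c j i ≤ c j :=
  (card_filter_le _ _).trans (by simp)

theorem mem_Icc_of_count_ne_zero {j i : ℤ} (h : A.count c j i ≠ 0) :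
    i ∈ Icc (j - L) (j + R) := by
  obtain ⟨k, hk⟩ := card_ne_zero.1 h
  have := mem_Icc.1 (A.emit_mem_Icc c (mem_filter.1 hk).2)
  exact mem_Icc.2 ⟨by omega, by omega⟩

theorem arrivals_eq_sum {i : ℤ} {s : Finset ℤ} (hs : ∀ j, A.count c j i ≠ 0 → j ∈ s) :
    A.arrivals c i = ∑ j ∈ s, A.count c j i :=
  finsum_eq_sum_of_support_subset _ hs

theorem departures_eq_sum {j : ℤ} {s : Finset ℤ} (hs : ∀ i, A.count c j i ≠ 0 → i ∈ s) :
    A.departures c j = ∑ i ∈ s, A.count c j i :=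
  finsum_eq_sum_of_support_subset _ hs

theorem arrivals_eq_sum_Icc (i : ℤ) :
    A.arrivals c i = ∑ d ∈ Icc (-(L : ℤ)) R, A.count c (i - d) i := by
  rw [arrivals, ← finsum_comp_equiv (Equiv.subLeft i)]
  refine finsum_eq_sum_of_support_subset _ fun d hd => ?_
  have := mem_Icc.1 (A.mem_Icc_of_count_ne_zero c hd)
  simp only [Equiv.subLeft_apply] at this
  exact mem_Icc.2 ⟨by omega, by omega⟩

theorem departures_eq_sum_Icc (j : ℤ) :
    A.departures c j = ∑ d ∈ Icc (-(L : ℤ)) R, A.count c j (j + d) := by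
  rw [departures, ← finsum_comp_equiv (Equiv.addLeft j)]
  refine finsum_eq_sum_of_support_subset _ fun d hd => ?_
  have := mem_Icc.1 (A.mem_Icc_of_count_ne_zero c hd)
  simp only [Equiv.coe_addLeft] at this
  exact mem_Icc.2 ⟨by omega, by omega⟩

theorem departures_add_vanishing (j : ℤ) : A.departures c j + A.vanishing c j = c j := by
  classical
  have hmaps : Set.MapsTo (A.emit c j) (univ : Finset (Fin (c j : ℕ)))
      (insert none ((Icc (-(L : ℤ)) R).map Function.Embedding.some) : Finset (Option ℤ)) := by
    intro k _
    cases h : A.emit c j k with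
    | none => simp
    | some d => simpa using A.emit_mem_Icc c h
  have := card_eq_sum_card_fiberwise hmaps
  rw [sum_insert (by simp), sum_map, card_univ, Fintype.card_fin] at this
  rw [this, add_comm, departures_eq_sum_Icc, vanishing]
  simp [count_eq]

theorem count_comp_add_right (m j i : ℤ) :
    A.count (fun x => c (x + m)) j i = A.count c (j + m) (i + m) := by
  have hL : ∀ t : ℤ, j - L + t + m = j + m - L + t := fun t => by ring
  have hR : ∀ t : ℤ, j + 1 + t + m = j + m + 1 + t := fun t => by ring
  simp only [count, hL, hR, add_sub_add_right_eq_sub]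

theorem count_add_period {p : ℤ} (hc : Function.Periodic c p) (j i : ℤ) :
    A.count c (j + p) (i + p) = A.count c j i := by
  rw [← count_comp_add_right, show (fun x => c (x + p)) = c from funext hc]

/-- Index both sides by the displacement `d`: for fixed `d` the flux `x ↦ count c x (x + d)`
is periodic, so its sums over the two shifted periods agree. -/
theorem sum_arrivals_eq_sum_departures {p : ℕ} (hc : Function.Periodic c p) (s : ℤ) :
    ∑ k ∈ range p, A.arrivals c (s + k) = ∑ k ∈ range p, A.departures c (s + k) := by
  simp only [arrivals_eq_sum_Icc, departures_eq_sum_Icc]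
  rw [sum_comm, sum_comm (s := range p)]
  refine sum_congr rfl fun d _ => ?_
  have hflux : Function.Periodic (fun x => A.count c x (x + d)) p := fun x => by
    simpa only [add_right_comm] using A.count_add_period c hc x (x + d)
  calc ∑ k ∈ range p, A.count c (s + k - d) (s + k)
      = ∑ k ∈ range p, A.count c (s - d + k) (s - d + k + d) := by
        refine sum_congr rfl fun k _ => ?_; congr 1 <;> ring
    _ = ∑ k ∈ range p, A.count c (s + k) (s + k + d) := by
        rw [hflux.sum_range_comp_add, hflux.sum_range_comp_add]

theorem vanishing_eq_zero_of_periodic {p : ℕ} (hc : Function.Periodic c p) (hp : 0 < p) {j : ℤ}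
    (hmass : ∑ k ∈ range p, A.arrivals c (j + k) = ∑ k ∈ range p, (c (j + k) : ℕ)) :
    A.vanishing c j = 0 := by
  have htotal := sum_congr rfl fun k (_ : k ∈ range p) => A.departures_add_vanishing c (j + k)
  rw [sum_add_distrib, ← hmass, sum_arrivals_eq_sum_departures A c hc, add_eq_left,
    sum_eq_zero_iff] at htotal
  simpa using htotal 0 (Finset.mem_range.2 hp)

theorem sum_arrivals_eq_sum_of_closed (I : Finset ℤ) (hvan : ∀ j ∈ I, A.vanishing c j = 0)
    (hout : ∀ j ∈ I, ∀ i, A.count c j i ≠ 0 → i ∈ I)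
    (hin : ∀ i ∈ I, ∀ j, A.count c j i ≠ 0 → j ∈ I) :
    ∑ i ∈ I, A.arrivals c i = ∑ j ∈ I, (c j : ℕ) :=
  calc ∑ i ∈ I, A.arrivals c i = ∑ i ∈ I, ∑ j ∈ I, A.count c j i :=
        sum_congr rfl fun i hi => A.arrivals_eq_sum c (hin i hi)
    _ = ∑ j ∈ I, A.departures c j := by
        rw [sum_comm]; exact sum_congr rfl fun j hj => (A.departures_eq_sum c (hout j hj)).symm
    _ = ∑ j ∈ I, (c j : ℕ) := sum_congr rfl fun j hj => by
        rw [← A.departures_add_vanishing c j, hvan j hj, add_zero]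

theorem finsum_ite_ne_eq_sum_erase (i : ℤ) :
    (∑ᶠ j, if j = i then 0 else A.count c j i)
      = ∑ j ∈ (Icc (i - R) (i + L)).erase i, A.count c j i := by
  rw [finsum_eq_sum_of_support_subset (s := (Icc (i - R) (i + L)).erase i)]
  · exact sum_congr rfl fun j hj => if_neg (ne_of_mem_erase hj)
  · intro j hj
    have hji : j ≠ i := fun h => hj (if_pos h)
    have := mem_Icc.1 (A.mem_Icc_of_count_ne_zero c (by simpa [hji] using hj))
    exact mem_erase.2 ⟨hji, mem_Icc.2 ⟨by omega, by omega⟩⟩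

theorem count_self_add_finsum_ite_ne (i : ℤ) :
    A.count c i i + (∑ᶠ j, if j = i then 0 else A.count c j i) = A.arrivals c i := by
  have hmem : i ∈ Icc (i - R) (i + L) := mem_Icc.2 ⟨by omega, by omega⟩
  rw [finsum_ite_ne_eq_sum_erase, add_sum_erase _ (fun j => A.count c j i) hmem,
    arrivals_eq_sum]
  intro j hj
  have := mem_Icc.1 (A.mem_Icc_of_count_ne_zero c hj)
  exact mem_Icc.2 ⟨by omega, by omega⟩

theorem glob_val_eq_arrivals [NeZero q] {i : ℤ} (h : A.arrivals c i ≤ q - 1) :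
    (A.glob c i : ℕ) = A.arrivals c i :=
  min_eq_right h

namespace NonAnticipating

variable {A}

theorem arrivals_le (hA : A.NonAnticipating) (i : ℤ) : A.arrivals c i ≤ q - 1 := by
  have := hA c i
  have := A.count_le c i i
  have := (c i).isLt
  rw [← count_self_add_finsum_ite_ne]
  omega

theorem count_eq_zero_of_full (hA : A.NonAnticipating) {i : ℤ} (hi : (c i : ℕ) = q - 1) {j : ℤ}
    (hji : j ≠ i) :
    A.count c j i = 0 := by
  have hzero := hA c i
  rw [hi, Nat.sub_self, Nat.le_zero, finsum_ite_ne_eq_sum_erase, sum_eq_zero_iff] at hzero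
  by_contra hj
  have := mem_Icc.1 (A.mem_Icc_of_count_ne_zero c hj)
  exact hj (hzero j (mem_erase.2 ⟨hji, mem_Icc.2 ⟨by omega, by omega⟩⟩))

theorem arrivals_eq_of_glob_eq [NeZero q] (hA : A.NonAnticipating)
    {F : (ℤ → Fin q) → ℤ → Fin q} (hglob : ∀ c i, A.glob c i = F c i) (i : ℤ) :
    A.arrivals c i = F c i := by
  rw [← hglob, A.glob_val_eq_arrivals c (hA.arrivals_le c i)]

/-- No particle enters or leaves `[-B, B)`: zeros send nothing, and full cells receive only
from themselves. -/
theorem sum_arrivals_Ico_of_step (hA : A.NonAnticipating)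
    (hvan : ∀ j, A.vanishing c j = 0) {B : ℕ} (hL : L ≤ B) (hR : R ≤ B)
    (hc : ∀ i : ℤ, -(2 * B : ℤ) ≤ i → i < 2 * B → (c i : ℕ) = if 0 ≤ i then q - 1 else 0) :
    ∑ i ∈ Ico (-(B : ℤ)) B, A.arrivals c i = B * (q - 1) := by
  have hsend : ∀ {j i}, A.count c j i ≠ 0 → -(2 * B : ℤ) ≤ j → j < 2 * B → 0 ≤ j := by
    intro j i h hj₁ hj₂
    by_contra hneg
    have := A.count_le c j i
    rw [hc j hj₁ hj₂, if_neg hneg] at this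
    omega
  have hrecv : ∀ {j i}, A.count c j i ≠ 0 → 0 ≤ i → i < 2 * B → j = i := by
    intro j i h hi₁ hi₂
    by_contra hji
    refine h (hA.count_eq_zero_of_full c ?_ hji)
    rw [hc i (by omega) hi₂, if_pos hi₁]
  rw [A.sum_arrivals_eq_sum_of_closed c _ (fun j _ => hvan j)]
  · rw [sum_congr rfl fun i hi => hc i (by rw [mem_Ico] at hi; omega)
        (by rw [mem_Ico] at hi; omega),
      ← sum_filter, sum_const, smul_eq_mul,
      show {i ∈ Ico (-(B : ℤ)) B | 0 ≤ i} = Ico 0 (B : ℤ) by ext; simp,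
      Int.card_Ico, sub_zero, Int.toNat_natCast]
  · intro j hj i h
    have hi := mem_Icc.1 (A.mem_Icc_of_count_ne_zero c h)
    simp only [mem_Ico] at hj ⊢
    have := hsend h (by omega) (by omega)
    have := fun hiB => hrecv h (by omega) (by omega : i < 2 * B)
    omega
  · intro i hi j h
    have hj := mem_Icc.1 (A.mem_Icc_of_count_ne_zero c h)
    simp only [mem_Ico] at hi ⊢
    have := hsend h (by omega) (by omega)
    have := fun hi₀ => hrecv h hi₀ (by omega)
    omega

end NonAnticipating

end PA

theorem Conserves.apply_const {q n : ℕ} {f : (Fin n → Fin q) → Fin q} (hf : Conserves q n f)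
    (a : Fin q) : f (fun _ => a) = a := by
  have h := hf 1 le_rfl (fun _ => a) fun _ => rfl
  simp only [sum_range_one] at h
  exact Fin.ext (by exact_mod_cast h)

theorem Conserves.sum_range_window {q n : ℕ} {f : (Fin n → Fin q) → Fin q}
    (hf : Conserves q n f) {p : ℕ} (hp : 0 < p) {c : ℤ → Fin q} (hc : Function.Periodic c p)
    (s o : ℤ) :
    ∑ k ∈ range p, (f (fun t => c (s + k - o + t)) : ℕ) = ∑ k ∈ range p, (c (s + k) : ℕ) := by
  have hw : Function.Periodic (fun x => c (s - o + x)) p := fun x => by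
    simpa only [add_assoc] using hc (s - o + x)
  have h := hf p hp (fun x => c (s - o + x)) hw
  have hidx : ∀ k t : ℤ, s - o + (k + t) = s + k - o + t := fun k t => by ring
  simp only [hidx] at h
  have hval : Function.Periodic (fun x => (c x : ℕ)) p := fun x => congrArg Fin.val (hc x)
  have h₁ := hval.sum_range_comp_add (s - o)
  have h₂ := hval.sum_range_comp_add s
  beta_reduce at h₁ h₂
  rw [h₂, ← h₁]
  exact_mod_cast h

section stepConfig

variable {q : ℕ} [NeZero q]

def stepConfig (B : ℕ) (a : Fin q) (i : ℤ) : Fin q :=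
  if i % (4 * B : ℕ) < 2 * B then a else 0

theorem stepConfig_periodic (B : ℕ) (a : Fin q) :
    Function.Periodic (stepConfig B a) (4 * B : ℕ) := fun i => by
  simp only [stepConfig, ← Int.emod_eq_add_self_emod]

theorem stepConfig_of_mem {B : ℕ} {a : Fin q} {i : ℤ} (h₁ : -(2 * B : ℤ) ≤ i) (h₂ : i < 2 * B) :
    stepConfig B a i = if 0 ≤ i then a else 0 := by
  have hmod : i % (4 * B : ℕ) = if 0 ≤ i then i else i + 4 * B := by
    split_ifs with hi
    · exact Int.emod_eq_of_lt hi (by omega)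
    · rw [Int.emod_eq_add_self_emod, Int.emod_eq_of_lt (by omega) (by omega)]; push_cast; ring
  simp only [stepConfig, hmod]
  split_ifs <;> omega

theorem stepConfig_window {B n ℓ : ℕ} {a : Fin q} {i : ℤ} (hℓ : ℓ ≤ B) (hn : n ≤ B)
    (h₁ : -(B : ℤ) ≤ i) (h₂ : i < B) :
    (fun t : Fin n => stepConfig B a (i - ℓ + t))
      = fun t : Fin n => if (t : ℕ) < ((ℓ : ℤ) - i).toNat then 0 else a := by
  funext t
  rw [stepConfig_of_mem (by omega) (by omega)]
  split_ifs <;> first | rfl | omega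

end stepConfig

theorem sum_Ico_toNat_sub (h : ℕ → ℕ) {n ℓ B : ℕ} (hh : ∀ m, n ≤ m → h m = 0) (hℓ : ℓ ≤ B)
    (hn : n ≤ B + 1) :
    ∑ i ∈ Ico (-(B : ℤ)) B, h ((ℓ - i).toNat) = (B - ℓ) * h 0 + ∑ m ∈ Icc 1 (n - 1), h m := by
  rw [← Ico_union_Ico_eq_Ico (b := (ℓ : ℤ)) (by omega) (by omega),
    sum_union (Ico_disjoint_Ico_consecutive _ _ _), add_comm]
  congr 1
  · rw [sum_congr rfl fun i hi => by rw [Int.toNat_eq_zero.2 (by rw [mem_Ico] at hi; omega)],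
      sum_const, Int.card_Ico, smul_eq_mul]
    congr 1
    omega
  · calc ∑ i ∈ Ico (-(B : ℤ)) ℓ, h ((ℓ - i).toNat) = ∑ m ∈ Ioc 0 (ℓ + B), h m := by
          refine sum_nbij' (fun i => ((ℓ : ℤ) - i).toNat) (fun m => (ℓ : ℤ) - m)
            ?_ ?_ ?_ ?_ fun _ _ => rfl <;> intro x hx <;>
            simp only [mem_Ico, mem_Ioc] at hx ⊢ <;> omega
      _ = ∑ m ∈ Icc 1 (n - 1), h m := by
          refine (sum_subset (fun m hm => ?_) fun m hm hm' => hh m ?_).symm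
          · rw [mem_Icc] at hm; rw [mem_Ioc]; omega
          · rw [mem_Icc] at hm'; rw [mem_Ioc] at hm; omega

/-- if a conservative CA with offset `ℓ` is the global map of some
non-anticipating particle automaton (each cell `i` receives from the other cells at most
`q − 1 − c_i` particles), then `ℓ(q−1) = ∑_{i=1}^{n−1} f(0^i, (q−1)^{n−i})`. -/
theorem non_anticipating_forces_offset
    (q n : ℕ) (hq : 2 ≤ q) [NeZero q]
    (f : (Fin n → Fin q) → Fin q) (hf : Conserves q n f)
    (ℓ : ℕ)
    (F : (ℤ → Fin q) → ℤ → Fin q)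
    (hF : ∀ (c : ℤ → Fin q) (i : ℤ),
      F c i = f (fun t => c (i - (ℓ : ℤ) + ((t : ℕ) : ℤ))))
    (L R : ℕ) (G : PA q L R)
    (hglob : ∀ (c : ℤ → Fin q) (i : ℤ), G.glob c i = F c i)
    (hna : ∀ (c : ℤ → Fin q) (i : ℤ),
      (∑ᶠ j : ℤ, if j = i then 0 else G.count c j i) ≤ q - 1 - ((c i : ℕ))) :
    ℓ * (q - 1) =
      ∑ i ∈ Finset.Icc 1 (n - 1),
        ((f (fun t => if (t : ℕ) < i then (0 : Fin q) else ⟨q - 1, by omega⟩) : ℕ)) := by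
  have hA : G.NonAnticipating := hna
  set top : Fin q := ⟨q - 1, by omega⟩
  set B := L + R + n + ℓ + 1
  have hper := stepConfig_periodic B top
  have harr : ∀ c i, G.arrivals c i = f (fun t => c (i - ℓ + t)) := fun c i => by
    rw [hA.arrivals_eq_of_glob_eq c hglob, hF]
  have hvan : ∀ j, G.vanishing (stepConfig B top) j = 0 := fun j =>
    G.vanishing_eq_zero_of_periodic _ hper (by omega) <| by
      simpa only [harr] using hf.sum_range_window (by omega) hper j ℓ
  have hmass := hA.sum_arrivals_Ico_of_step _ hvan (B := B) (by omega) (by omega)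
    fun i h₁ h₂ => by rw [stepConfig_of_mem h₁ h₂]; split_ifs <;> rfl
  have hzero : ∀ m, n ≤ m → (f (fun t => if (t : ℕ) < m then 0 else top) : ℕ) = 0 :=
    fun m hm => by rw [funext fun t : Fin n => if_pos (by omega), hf.apply_const]; rfl
  have htop : (f (fun t : Fin n => if (t : ℕ) < 0 then 0 else top) : ℕ) = q - 1 := by
    rw [funext fun t : Fin n => if_neg (Nat.not_lt_zero t), hf.apply_const]
  rw [sum_congr rfl fun i hi => by
      obtain ⟨h₁, h₂⟩ := mem_Ico.1 hi
      rw [harr, stepConfig_window (by omega) (by omega) h₁ h₂],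
    sum_Ico_toNat_sub _ hzero (by omega) (by omega), htop] at hmass
  have := Nat.sub_mul B ℓ (q - 1)
  have := Nat.mul_le_mul_right (q - 1) (show ℓ ≤ B by omega)
  omega
end

section
/- Let Q = {0,…,q−1}, let F : Q^ℤ → Q^ℤ be a conservative CA, and let G be a conservative particle automaton whose global map equals F. For c ∈ Q^ℤ define V_i(c) = ∑_{k=1}^{c_i} [g_{c_i}(c_{i−L},…,c_{i−1}, c_{i+1},…,c_{i+R})]_k ∈ ℤ (the sum of the displacements of the particles at cell i; V_i(c) = 0 if c_i = 0). Say G preserves momentum if for every p ≥ 1 and every p-periodic configuration c, ∑_{i=0}^{p−1} V_i(c) = ∑_{i=0}^{p−1} V_i(F(c)). Then G preserves momentum if and only if F satisfies: for every finite configuration c (c_i = 0 for all but finitely many i), writing c' = F(c) and c'' = F(c'), ∑_{i∈ℤ} ∑_{j≤i} (c_j − c'_j) = ∑_{i∈ℤ} ∑_{j≤i} (c'_j − c''_j) (all these sums having only finitely many nonzero terms). In particular, if G and G' are two conservative PA with the same global map F, then G preserves momentum if and only if G' does. -/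
namespace PA

/-- `V_i(c)`: the sum of the velocities (displacements) of the particles located at cell
`i` of configuration `c` (a vanishing entry `†` contributes `0`; for a conservative PA no
entry vanishes). -/
noncomputable def vel {q L R : ℕ} (A : PA q L R) (c : ℤ → Fin q) (i : ℤ) : ℤ :=
  ∑ k : Fin ((c i : ℕ)),
    (A.g (c i) (fun t => c (i - (L : ℤ) + ((t : ℕ) : ℤ)))
      (fun t => c (i + 1 + ((t : ℕ) : ℤ))) k).getD 0

/-- A PA `A` whose global map is `F` preserves momentum if the total velocity over a
period is unchanged when passing from any periodic configuration `c` to `F c`. -/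
noncomputable def PreservesMomentum {q L R : ℕ} (A : PA q L R)
    (F : (ℤ → Fin q) → ℤ → Fin q) : Prop :=
  ∀ p : ℕ, 1 ≤ p → ∀ c : ℤ → Fin q, (∀ i : ℤ, c (i + (p : ℤ)) = c i) →
    ∑ i ∈ Finset.range p, A.vel c (i : ℤ) =
    ∑ i ∈ Finset.range p, A.vel (F c) (i : ℤ)

end PA

namespace PAaux

open Finset

variable {q L R : ℕ}

lemma count_eq_zero_of_src (A : PA q L R) (c : ℤ → Fin q) (j i : ℤ)
    (h : (c j : ℕ) = 0) : A.count c j i = 0 := by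
  apply Finset.card_eq_zero.2
  apply Finset.eq_empty_of_forall_notMem
  intro k _
  exact absurd k.2 (by omega)

lemma count_eq_zero_of_far (A : PA q L R) (c : ℤ → Fin q) (j i : ℤ)
    (h : ¬ (j - (L : ℤ) ≤ i ∧ i ≤ j + (R : ℤ))) : A.count c j i = 0 := by
  apply Finset.card_eq_zero.2
  apply Finset.eq_empty_of_forall_notMem
  intro k hk
  rw [Finset.mem_filter] at hk
  have := A.mem_range _ _ _ _ _ hk.2
  omega

lemma count_congr (A : PA q L R) (c c' : ℤ → Fin q) (j i : ℤ)
    (h : ∀ x, j - (L : ℤ) ≤ x → x ≤ j + (R : ℤ) → c x = c' x) :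
    A.count c j i = A.count c' j i := by
  have h0 : c j = c' j := h j (by omega) (by omega)
  have h1 : (fun t : Fin L => c (j - (L : ℤ) + ((t : ℕ) : ℤ)))
      = fun t : Fin L => c' (j - (L : ℤ) + ((t : ℕ) : ℤ)) := by
    funext t
    exact h _ (by omega) (by have := t.2; omega)
  have h2 : (fun t : Fin R => c (j + 1 + ((t : ℕ) : ℤ)))
      = fun t : Fin R => c' (j + 1 + ((t : ℕ) : ℤ)) := by
    funext t
    exact h _ (by have := t.2; omega) (by have := t.2; omega)
  unfold PA.count
  rw [h0, h1, h2]

lemma vel_congr (A : PA q L R) (c c' : ℤ → Fin q) (i : ℤ)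
    (h : ∀ x, i - (L : ℤ) ≤ x → x ≤ i + (R : ℤ) → c x = c' x) :
    A.vel c i = A.vel c' i := by
  have h0 : c i = c' i := h i (by omega) (by omega)
  have h1 : (fun t : Fin L => c (i - (L : ℤ) + ((t : ℕ) : ℤ)))
      = fun t : Fin L => c' (i - (L : ℤ) + ((t : ℕ) : ℤ)) := by
    funext t
    exact h _ (by omega) (by have := t.2; omega)
  have h2 : (fun t : Fin R => c (i + 1 + ((t : ℕ) : ℤ)))
      = fun t : Fin R => c' (i + 1 + ((t : ℕ) : ℤ)) := by
    funext t
    exact h _ (by have := t.2; omega) (by have := t.2; omega)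
  unfold PA.vel
  rw [h0, h1, h2]

lemma vel_eq_zero (A : PA q L R) (c : ℤ → Fin q) (i : ℤ) (h : (c i : ℕ) = 0) :
    A.vel c i = 0 := by
  unfold PA.vel
  apply Finset.sum_eq_zero
  intro k _
  exact absurd k.2 (by omega)

lemma count_shift (A : PA q L R) (c : ℤ → Fin q) (a j i : ℤ) :
    A.count (fun x => c (x - a)) j i = A.count c (j - a) (i - a) := by
  show (Finset.univ.filter fun k : Fin ((c (j - a) : ℕ)) =>
    A.g (c (j - a)) (fun t => c (j - (L : ℤ) + ((t : ℕ) : ℤ) - a))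
      (fun t => c (j + 1 + ((t : ℕ) : ℤ) - a)) k = some (i - j)).card = _
  have h1 : (fun t : Fin L => c (j - (L : ℤ) + ((t : ℕ) : ℤ) - a))
      = fun t : Fin L => c (j - a - (L : ℤ) + ((t : ℕ) : ℤ)) := by
    funext t; congr 1; ring
  have h2 : (fun t : Fin R => c (j + 1 + ((t : ℕ) : ℤ) - a))
      = fun t : Fin R => c (j - a + 1 + ((t : ℕ) : ℤ)) := by
    funext t; congr 1; ring
  have h3 : i - j = (i - a) - (j - a) := by ring
  rw [h1, h2, h3]
  rfl

lemma vel_shift (A : PA q L R) (c : ℤ → Fin q) (a i : ℤ) :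
    A.vel (fun x => c (x - a)) i = A.vel c (i - a) := by
  show (∑ k : Fin ((c (i - a) : ℕ)),
    (A.g (c (i - a)) (fun t => c (i - (L : ℤ) + ((t : ℕ) : ℤ) - a))
      (fun t => c (i + 1 + ((t : ℕ) : ℤ) - a)) k).getD 0) = _
  have h1 : (fun t : Fin L => c (i - (L : ℤ) + ((t : ℕ) : ℤ) - a))
      = fun t : Fin L => c (i - a - (L : ℤ) + ((t : ℕ) : ℤ)) := by
    funext t; congr 1; ring
  have h2 : (fun t : Fin R => c (i + 1 + ((t : ℕ) : ℤ) - a))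
      = fun t : Fin R => c (i - a + 1 + ((t : ℕ) : ℤ)) := by
    funext t; congr 1; ring
  rw [h1, h2]
  rfl

variable {A : PA q L R}

/-- destination map of particle `k` at cell `j` -/
noncomputable def dest (A : PA q L R) (c : ℤ → Fin q) (j : ℤ) (k : Fin ((c j : ℕ))) : ℤ :=
  j + (A.g (c j) (fun t => c (j - (L : ℤ) + ((t : ℕ) : ℤ)))
      (fun t => c (j + 1 + ((t : ℕ) : ℤ))) k).getD 0

lemma g_eq_some (hA : ∀ v u u' k, A.g v u u' k ≠ none) (c : ℤ → Fin q) (j : ℤ) (k : Fin ((c j : ℕ))) :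
    A.g (c j) (fun t => c (j - (L : ℤ) + ((t : ℕ) : ℤ)))
      (fun t => c (j + 1 + ((t : ℕ) : ℤ))) k
      = some (dest A c j k - j) := by
  obtain ⟨d, hd⟩ := Option.ne_none_iff_exists'.1 (hA _ _ _ k)
  rw [hd]; unfold dest; rw [hd]; simp

lemma dest_mem (hA : ∀ v u u' k, A.g v u u' k ≠ none) (c : ℤ → Fin q) (j : ℤ) (k : Fin ((c j : ℕ))) :
    dest A c j k ∈ Finset.Icc (j - (L : ℤ)) (j + (R : ℤ)) := by
  have := A.mem_range _ _ _ _ _ (g_eq_some hA c j k)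
  rw [Finset.mem_Icc]; omega

lemma count_eq_card_dest (hA : ∀ v u u' k, A.g v u u' k ≠ none) (c : ℤ → Fin q) (j i : ℤ) :
    A.count c j i = (Finset.univ.filter fun k : Fin ((c j : ℕ)) =>
      dest A c j k = i).card := by
  unfold PA.count
  congr 1
  apply Finset.filter_congr
  intro k _
  rw [g_eq_some hA c j k]
  constructor
  · intro h; have := Option.some_injective _ h; omega
  · intro h; subst h; simp

lemma sum_count_eq (hA : ∀ v u u' k, A.g v u u' k ≠ none) (c : ℤ → Fin q) (j : ℤ) :
    ∑ i ∈ Finset.Icc (j - (L : ℤ)) (j + (R : ℤ)), A.count c j i = (c j : ℕ) := by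
  have := Finset.card_eq_sum_card_fiberwise
    (f := dest A c j) (s := Finset.univ) (t := Finset.Icc (j - (L : ℤ)) (j + (R : ℤ)))
    (fun k _ => dest_mem hA c j k)
  simp only [Finset.card_univ, Fintype.card_fin] at this
  rw [this]
  exact Finset.sum_congr rfl (fun i _ => count_eq_card_dest hA c j i)

lemma vel_eq (hA : ∀ v u u' k, A.g v u u' k ≠ none) (c : ℤ → Fin q) (j : ℤ) :
    A.vel c j = ∑ i ∈ Finset.Icc (j - (L : ℤ)) (j + (R : ℤ)),
      (i - j) * (A.count c j i : ℤ) := by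
  have key : ∀ i ∈ Finset.Icc (j - (L : ℤ)) (j + (R : ℤ)),
      (i - j) * (A.count c j i : ℤ)
        = ∑ k ∈ Finset.univ.filter (fun k : Fin ((c j : ℕ)) => dest A c j k = i),
            (dest A c j k - j) := by
    intro i _
    rw [count_eq_card_dest hA c j i,
      show (∑ k ∈ Finset.univ.filter (fun k : Fin ((c j : ℕ)) => dest A c j k = i),
          (dest A c j k - j))
        = ∑ _k ∈ Finset.univ.filter (fun k : Fin ((c j : ℕ)) => dest A c j k = i),
          (i - j) from Finset.sum_congr rfl
            (fun k hk => by rw [(Finset.mem_filter.1 hk).2]),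
      Finset.sum_const, nsmul_eq_mul, mul_comm]
  rw [Finset.sum_congr rfl key,
    Finset.sum_fiberwise_of_maps_to (fun k _ => dest_mem hA c j k)]
  unfold PA.vel
  apply Finset.sum_congr rfl
  intro k _
  rw [g_eq_some hA c j k]
  simp [dest]

lemma finsum_count (A : PA q L R) (c : ℤ → Fin q) (i : ℤ) :
    (∑ᶠ j : ℤ, A.count c j i)
      = ∑ j ∈ Finset.Icc (i - (R : ℤ)) (i + (L : ℤ)), A.count c j i := by
  apply finsum_eq_sum_of_support_subset
  intro j hj
  simp only [Function.mem_support] at hj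
  simp only [Finset.coe_Icc, Set.mem_Icc]
  by_contra hc
  exact hj (count_eq_zero_of_far A c j i (by omega))

lemma glob_val [NeZero q] (A : PA q L R)
    (hb : ∀ (c : ℤ → Fin q) (i : ℤ), (∑ᶠ j : ℤ, A.count c j i) ≤ q - 1)
    (c : ℤ → Fin q) (i : ℤ) :
    ((A.glob c i : ℕ))
      = ∑ j ∈ Finset.Icc (i - (R : ℤ)) (i + (L : ℤ)), A.count c j i := by
  show min (q - 1) _ = _
  rw [min_eq_right (hb c i), finsum_count]

lemma glob_congr [NeZero q] (A : PA q L R) (c c' : ℤ → Fin q) (i : ℤ)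
    (h : ∀ x, i - ((L : ℤ) + R) ≤ x → x ≤ i + ((L : ℤ) + R) → c x = c' x) :
    A.glob c i = A.glob c' i := by
  apply Fin.ext
  show min (q - 1) _ = min (q - 1) _
  rw [finsum_count, finsum_count]
  congr 1
  apply Finset.sum_congr rfl
  intro j hj
  rw [Finset.mem_Icc] at hj
  exact count_congr A c c' j i (fun x h1 h2 => h x (by omega) (by omega))

lemma glob_zero [NeZero q] (A : PA q L R) (c : ℤ → Fin q) (i : ℤ)
    (h : ∀ x, i - (R : ℤ) ≤ x → x ≤ i + (L : ℤ) → (c x : ℕ) = 0) :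
    ((A.glob c i : ℕ)) = 0 := by
  show min (q - 1) _ = 0
  rw [finsum_count]
  have : ∀ j ∈ Finset.Icc (i - (R : ℤ)) (i + (L : ℤ)), A.count c j i = 0 := by
    intro j hj
    rw [Finset.mem_Icc] at hj
    exact count_eq_zero_of_src A c j i (h j hj.1 hj.2)
  rw [Finset.sum_congr rfl this]
  simp

lemma glob_shift [NeZero q] (A : PA q L R) (c : ℤ → Fin q) (a i : ℤ) :
    A.glob (fun x => c (x - a)) i = A.glob c (i - a) := by
  apply Fin.ext
  show min (q - 1) _ = min (q - 1) _
  congr 1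
  have h1 : (fun j => A.count (fun x => c (x - a)) j i)
      = fun j => A.count c (j - a) (i - a) := by
    funext j; exact count_shift A c a j i
  rw [h1]
  exact finsum_comp_equiv (Equiv.subRight a) (f := fun j => A.count c j (i - a))


lemma sum_of_zeros {M : Type*} [AddCommMonoid M] (s t : Finset ℤ) (f : ℤ → M)
    (h1 : ∀ x ∈ s, x ∉ t → f x = 0) (h2 : ∀ x ∈ t, x ∉ s → f x = 0) :
    ∑ x ∈ s, f x = ∑ x ∈ t, f x := by
  rw [Finset.sum_subset (Finset.subset_union_left (s₂ := t))
      (fun x hx hxs => (Finset.mem_union.1 hx).elim (fun h => absurd h hxs)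
        (fun h => h2 x h hxs))]
  rw [Finset.sum_subset (Finset.subset_union_right (s₁ := s))
      (fun x hx hxt => (Finset.mem_union.1 hx).elim (fun h => h1 x h hxt)
        (fun h => absurd h hxt))]

/-- the block `{u, u+1, …, u+n−1}` as a finset of integers -/
def blk (u : ℤ) (n : ℕ) : Finset ℤ := (Finset.range n).image (fun i : ℕ => u + (i : ℤ))

lemma mem_blk {u : ℤ} {n : ℕ} {x : ℤ} : x ∈ blk u n ↔ u ≤ x ∧ x < u + n := by
  simp only [blk, Finset.mem_image, Finset.mem_range]
  constructor
  · rintro ⟨i, hi, rfl⟩; omega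
  · intro h
    refine ⟨(x - u).toNat, by omega, by omega⟩

lemma sum_blk {M : Type*} [AddCommMonoid M] (u : ℤ) (n : ℕ) (h : ℤ → M) :
    ∑ x ∈ blk u n, h x = ∑ i ∈ Finset.range n, h (u + (i : ℤ)) :=
  Finset.sum_image (fun a _ b _ hab => by omega)

lemma shift_one (p : ℕ) (h : ℤ → ℤ) (hp : ∀ i, h (i + (p : ℤ)) = h i) (b : ℤ) :
    ∑ i ∈ Finset.range p, h (b + 1 + (i : ℤ)) = ∑ i ∈ Finset.range p, h (b + (i : ℤ)) := by
  have e1 : ∑ i ∈ Finset.range (p + 1), h (b + (i : ℤ))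
      = ∑ i ∈ Finset.range p, h (b + 1 + (i : ℤ)) + h b := by
    rw [Finset.sum_range_succ']
    congr 1
    · apply Finset.sum_congr rfl; intro i _; congr 1; push_cast; ring
    · congr 1; push_cast; ring
  have e2 : ∑ i ∈ Finset.range (p + 1), h (b + (i : ℤ))
      = ∑ i ∈ Finset.range p, h (b + (i : ℤ)) + h (b + (p : ℤ)) :=
    Finset.sum_range_succ _ _
  have e3 : h (b + (p : ℤ)) = h b := hp b
  rw [e3] at e2
  exact add_right_cancel (e1.symm.trans e2)

lemma periodic_sum (p : ℕ) (h : ℤ → ℤ) (hp : ∀ i, h (i + (p : ℤ)) = h i) (a : ℤ) :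
    ∑ i ∈ Finset.range p, h (a + (i : ℤ)) = ∑ i ∈ Finset.range p, h (i : ℤ) := by
  induction a using Int.induction_on with
  | zero => simp
  | succ k ih =>
    have := shift_one p h hp (k : ℤ)
    rw [ih] at this
    rw [← this]
  | pred k ih =>
    have := shift_one p h hp (-(k : ℤ) - 1)
    have e : (-(k : ℤ) - 1 + 1) = -(k : ℤ) := by ring
    rw [e, ih] at this
    rw [← this]


lemma card_blk (u : ℤ) (n : ℕ) : (blk u n).card = n := by
  rw [blk, Finset.card_image_of_injective _ (fun a b h => by omega), Finset.card_range]

section main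
variable [NeZero q] (A : PA q L R) (hA : A.Conservative)
  (F : (ℤ → Fin q) → ℤ → Fin q) (hglob : ∀ (c : ℤ → Fin q) (i : ℤ), A.glob c i = F c i)

include hA hglob

lemma Fval (c : ℤ → Fin q) (i : ℤ) :
    ((F c i : ℕ)) = ∑ j ∈ Finset.Icc (i - (R : ℤ)) (i + (L : ℤ)), A.count c j i := by
  rw [← hglob c i]; exact glob_val A hA.2 c i

lemma F_zero (c : ℤ → Fin q) (i : ℤ)
    (h : ∀ x, i - (R : ℤ) ≤ x → x ≤ i + (L : ℤ) → (c x : ℕ) = 0) :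
    ((F c i : ℕ)) = 0 := by
  rw [← hglob c i]; exact glob_zero A c i h

lemma F_congr (c c' : ℤ → Fin q) (i : ℤ)
    (h : ∀ x, i - ((L : ℤ) + R) ≤ x → x ≤ i + ((L : ℤ) + R) → c x = c' x) :
    F c i = F c' i := by
  rw [← hglob c i, ← hglob c' i]; exact glob_congr A c c' i h

lemma F_shift (c : ℤ → Fin q) (a i : ℤ) :
    F (fun x => c (x - a)) i = F c (i - a) := by
  rw [← hglob _ i, ← hglob c (i - a)]; exact glob_shift A c a i


lemma F_bound (c : ℤ → Fin q) (B : ℕ)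
    (hB : ∀ x : ℤ, (c x : ℕ) ≠ 0 → -(B : ℤ) ≤ x ∧ x ≤ (B : ℤ)) :
    ∀ x : ℤ, ((F c x : ℕ)) ≠ 0 → -((B : ℤ) + L + R) ≤ x ∧ x ≤ (B : ℤ) + L + R := by
  intro x hx
  by_contra hcon
  exact hx (F_zero A hA F hglob c x (fun y h1 h2 => by
    by_contra hy
    have := hB y hy
    omega))

lemma lemA (c : ℤ → Fin q) (B : ℕ)
    (hB : ∀ x : ℤ, (c x : ℕ) ≠ 0 → -(B : ℤ) ≤ x ∧ x ≤ (B : ℤ)) :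
    (∑ᶠ i : ℤ, ∑ᶠ j : ℤ, if j ≤ i then ((c j : ℤ)) - ((F c j : ℤ)) else 0)
      = ∑ᶠ i : ℤ, A.vel c i := by
  set M : ℤ := (B : ℤ) + (L : ℤ) + (R : ℤ) + 1 with hM
  have hM0 : 0 ≤ M := by positivity
  set I : Finset ℤ := blk (-M) (2 * (B + L + R + 1) + 1) with hI
  have memI : ∀ x : ℤ, x ∈ I ↔ -M ≤ x ∧ x ≤ M := by
    intro x
    rw [hI, mem_blk]
    constructor <;> intro h <;> constructor <;> push_cast at * <;> omega
  -- c vanishes outside I (with margin L+R)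
  have hc0 : ∀ x : ℤ, x ∉ I → (c x : ℕ) = 0 := by
    intro x hx
    by_contra h
    have := hB x h
    rw [memI] at hx
    omega
  -- F c vanishes outside I
  have hF0 : ∀ x : ℤ, x ∉ I → ((F c x : ℕ)) = 0 := by
    intro x hx
    rw [memI] at hx
    apply F_zero A hA F hglob
    intro y h1 h2
    by_contra h
    have := hB y h
    omega
  -- (F1): value of F c as a sum over I
  have F1 : ∀ j : ℤ, ((F c j : ℕ)) = ∑ j' ∈ I, A.count c j' j := by
    intro j
    rw [Fval A hA F hglob c j]
    apply sum_of_zeros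
    · intro x hx hxI
      apply count_eq_zero_of_src
      exact hc0 x hxI
    · intro x hxI hx
      rw [Finset.mem_Icc] at hx
      exact count_eq_zero_of_far A c x j (by omega)
  -- (F2): value of c as a sum over I
  have F2 : ∀ j' : ℤ, ((c j' : ℕ)) = ∑ j ∈ I, A.count c j' j := by
    intro j'
    by_cases h : (c j' : ℕ) = 0
    · rw [h]
      symm
      apply Finset.sum_eq_zero
      intro j _
      exact count_eq_zero_of_src A c j' j h
    · have hj' := hB j' h
      rw [← sum_count_eq hA.1 c j']
      apply Finset.sum_subset
      · intro x hx
        rw [Finset.mem_Icc] at hx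
        rw [memI]
        omega
      · intro x _ hx
        rw [Finset.mem_Icc] at hx
        exact count_eq_zero_of_far A c j' x (by omega)
  -- mass conservation over I
  have mass : ∑ j ∈ I, (((c j : ℤ)) - ((F c j : ℤ))) = 0 := by
    have e1 : ∑ j ∈ I, ((F c j : ℕ)) = ∑ j' ∈ I, ((c j' : ℕ)) := by
      rw [Finset.sum_congr rfl (fun j _ => F1 j), Finset.sum_comm]
      exact Finset.sum_congr rfl (fun j' _ => (F2 j').symm)
    rw [Finset.sum_sub_distrib]
    have : ((∑ j ∈ I, ((c j : ℕ)) : ℕ) : ℤ) = ((∑ j ∈ I, ((F c j : ℕ)) : ℕ) : ℤ) := by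
      rw [e1]
    push_cast at this
    omega
  -- inner finsum is a sum over I
  have inner : ∀ i : ℤ,
      (∑ᶠ j : ℤ, if j ≤ i then ((c j : ℤ)) - ((F c j : ℤ)) else 0)
        = ∑ j ∈ I, (if j ≤ i then ((c j : ℤ)) - ((F c j : ℤ)) else 0) := by
    intro i
    apply finsum_eq_sum_of_support_subset
    intro j hj
    simp only [Function.mem_support] at hj
    by_contra hjI
    apply hj
    have h1 := hc0 j hjI
    have h2 := hF0 j hjI
    have h1' : ((c j : ℤ)) = 0 := by exact_mod_cast h1
    have h2' : ((F c j : ℤ)) = 0 := by exact_mod_cast h2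
    rw [h1', h2', sub_zero]
    simp
  -- outer finsum is a sum over I
  have outer :
      (∑ᶠ i : ℤ, ∑ j ∈ I, (if j ≤ i then ((c j : ℤ)) - ((F c j : ℤ)) else 0))
        = ∑ i ∈ I, ∑ j ∈ I, (if j ≤ i then ((c j : ℤ)) - ((F c j : ℤ)) else 0) := by
    apply finsum_eq_sum_of_support_subset
    intro i hi
    simp only [Function.mem_support] at hi
    by_contra hiI
    apply hi
    rw [Finset.mem_coe, memI] at hiI
    rcases (by omega : i < -M ∨ M < i) with h | h
    · apply Finset.sum_eq_zero
      intro j hj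
      rw [memI] at hj
      rw [if_neg (by omega)]
    · rw [← mass]
      apply Finset.sum_congr rfl
      intro j hj
      rw [memI] at hj
      rw [if_pos (by omega)]
  -- step B: inner sum over i
  have stepB : ∀ j ∈ I, (∑ i ∈ I, if j ≤ i then ((c j : ℤ)) - ((F c j : ℤ)) else 0)
      = (M + 1 - j) * (((c j : ℤ)) - ((F c j : ℤ))) := by
    intro j hj
    rw [memI] at hj
    rw [← Finset.sum_filter]
    have hfil : I.filter (fun i => j ≤ i) = blk j (M + 1 - j).toNat := by
      ext x
      rw [Finset.mem_filter, memI x, mem_blk]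
      omega
    rw [hfil, Finset.sum_const, card_blk, nsmul_eq_mul]
    congr 1
    omega
  -- step C
  have stepC : ∑ j ∈ I, (M + 1 - j) * (((c j : ℤ)) - ((F c j : ℤ)))
      = (∑ j ∈ I, j * ((F c j : ℤ))) - ∑ j ∈ I, j * ((c j : ℤ)) := by
    have expand : ∀ j : ℤ, (M + 1 - j) * (((c j : ℤ)) - ((F c j : ℤ)))
        = (M + 1) * (((c j : ℤ)) - ((F c j : ℤ)))
          + (j * ((F c j : ℤ)) - j * ((c j : ℤ))) := by
      intro j; ring
    rw [Finset.sum_congr rfl (fun j _ => expand j), Finset.sum_add_distrib,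
      ← Finset.mul_sum, mass, mul_zero, zero_add, Finset.sum_sub_distrib]
  -- step D
  have stepD : ∑ j ∈ I, j * ((F c j : ℤ))
      = ∑ j' ∈ I, (A.vel c j' + j' * ((c j' : ℤ))) := by
    have e1 : ∀ j : ℤ, j * ((F c j : ℤ)) = ∑ j' ∈ I, j * ((A.count c j' j : ℤ)) := by
      intro j
      have h1 := F1 j
      have h2 : ((F c j : ℤ)) = ∑ j' ∈ I, ((A.count c j' j : ℤ)) := by exact_mod_cast h1
      rw [h2, Finset.mul_sum]
    rw [Finset.sum_congr rfl (fun j _ => e1 j), Finset.sum_comm]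
    apply Finset.sum_congr rfl
    intro j' _
    by_cases h : (c j' : ℕ) = 0
    · have hv := vel_eq_zero A c j' h
      have hc' : ((c j' : ℤ)) = 0 := by exact_mod_cast h
      rw [hv, hc', mul_zero, add_zero]
      apply Finset.sum_eq_zero
      intro j _
      rw [count_eq_zero_of_src A c j' j h]
      simp
    · have hj'B := hB j' h
      have sub : Finset.Icc (j' - (L : ℤ)) (j' + (R : ℤ)) ⊆ I := by
        intro x hx
        rw [Finset.mem_Icc] at hx
        rw [memI]
        omega
      rw [← Finset.sum_subset sub (fun x _ hx => by
        rw [count_eq_zero_of_far A c j' x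
          (by rw [Finset.mem_Icc] at hx; omega), Nat.cast_zero, mul_zero])]
      have velq := vel_eq hA.1 c j'
      have cntq := sum_count_eq hA.1 c j'
      have cntq' : ∑ x ∈ Finset.Icc (j' - (L : ℤ)) (j' + (R : ℤ)), ((A.count c j' x : ℤ))
          = ((c j' : ℤ)) := by exact_mod_cast cntq
      have expand2 : ∀ x : ℤ, x * ((A.count c j' x : ℤ))
          = (x - j') * ((A.count c j' x : ℤ)) + j' * ((A.count c j' x : ℤ)) := by
        intro x; ring
      rw [Finset.sum_congr rfl (fun x _ => expand2 x), Finset.sum_add_distrib,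
        ← Finset.mul_sum, cntq', ← velq]
  -- assemble
  have rhs : (∑ᶠ i : ℤ, A.vel c i) = ∑ j ∈ I, A.vel c j := by
    apply finsum_eq_sum_of_support_subset
    intro x hx
    simp only [Function.mem_support] at hx
    by_contra hxI
    exact hx (vel_eq_zero A c x (hc0 x hxI))
  rw [finsum_congr inner, outer, Finset.sum_comm,
    Finset.sum_congr rfl stepB, stepC, stepD, Finset.sum_add_distrib, rhs]
  ring


end main

/-- truncation of a configuration to a window `[a, b)` -/
def trunc [NeZero q] (c : ℤ → Fin q) (a b : ℤ) : ℤ → Fin q :=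
  fun x => if a ≤ x ∧ x < b then c x else 0

lemma key_diff [NeZero q] (p : ℕ) (hp : 1 ≤ p) (c : ℤ → Fin q)
    (hper : ∀ i : ℤ, c (i + (p : ℤ)) = c i)
    (O : (ℤ → Fin q) → ℤ → ℤ) (ρ : ℕ) (hρ : 1 ≤ ρ)
    (hOcongr : ∀ d d' : ℤ → Fin q, ∀ x : ℤ,
      (∀ y, x - (ρ : ℤ) ≤ y → y ≤ x + (ρ : ℤ) → d y = d' y) → O d x = O d' x)
    (hOzero : ∀ (d : ℤ → Fin q) (x : ℤ),
      (∀ y, x - (ρ : ℤ) ≤ y → y ≤ x + (ρ : ℤ) → d y = 0) → O d x = 0)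
    (hOshift : ∀ (d : ℤ → Fin q) (a x : ℤ), O (fun y => d (y - a)) x = O d (x - a))
    (k : ℕ) (hk : 3 * ρ + 3 ≤ k) :
    (∑ᶠ x : ℤ, O (trunc c 0 (((k+1) * p : ℕ) : ℤ)) x)
      - (∑ᶠ x : ℤ, O (trunc c 0 ((k * p : ℕ) : ℤ)) x)
      = ∑ i ∈ Finset.range p, O c (i : ℤ) := by
  set N1 : ℕ := (k+1) * p with hN1
  set N0 : ℕ := k * p with hN0
  have hN0k : (k : ℤ) ≤ (N0 : ℤ) := by
    have : k ≤ N0 := by rw [hN0]; nlinarith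
    exact_mod_cast this
  have hN01 : (N1 : ℤ) = (N0 : ℤ) + (p : ℤ) := by push_cast [hN1, hN0]; ring
  set e1 : ℤ → Fin q := trunc c 0 ((N1 : ℕ) : ℤ) with he1
  set e0 : ℤ → Fin q := trunc c 0 ((N0 : ℕ) : ℤ) with he0
  -- values of truncations
  have ve1 : ∀ y : ℤ, e1 y = if 0 ≤ y ∧ y < (N1 : ℤ) then c y else 0 := fun y => rfl
  have ve0 : ∀ y : ℤ, e0 y = if 0 ≤ y ∧ y < (N0 : ℤ) then c y else 0 := fun y => rfl
  -- periodicity of O c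
  have hcs : (fun y => c (y - (p : ℤ))) = c := by
    funext y
    rw [← hper (y - (p : ℤ))]
    congr 1
    ring
  have hOper : ∀ x : ℤ, O c (x + (p : ℤ)) = O c x := by
    intro x
    have h := hOshift c (p : ℤ) (x + (p : ℤ))
    rw [hcs] at h
    rw [h]
    congr 1
    ring
  -- support bounds and finsum evaluation
  have supp_gen : ∀ (N : ℕ), (∑ᶠ x : ℤ, O (trunc c 0 ((N : ℕ) : ℤ)) x)
      = ∑ i ∈ Finset.range (N + 2 * ρ), O (trunc c 0 ((N : ℕ) : ℤ)) (-(ρ : ℤ) + (i : ℤ)) := by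
    intro N
    rw [← sum_blk]
    apply finsum_eq_sum_of_support_subset
    intro x hx
    simp only [Function.mem_support] at hx
    by_contra hxb
    rw [Finset.mem_coe, mem_blk] at hxb
    push_cast at hxb
    apply hx
    apply hOzero
    intro y h1 h2
    have : ¬ (0 ≤ y ∧ y < ((N : ℕ) : ℤ)) := by omega
    exact if_neg this
  have S1 := supp_gen N1
  have S0 := supp_gen N0
  -- reindex S0 by +p
  have S0' : (∑ᶠ x : ℤ, O e0 x)
      = ∑ i ∈ Finset.range (N0 + 2 * ρ), O (fun y => e0 (y - (p : ℤ))) ((p : ℤ) - ρ + i) := by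
    rw [S0]
    apply Finset.sum_congr rfl
    intro i _
    rw [hOshift]
    congr 1
    ring
  -- split S1
  have S1' : (∑ᶠ x : ℤ, O e1 x)
      = (∑ i ∈ Finset.range p, O e1 (-(ρ : ℤ) + i))
        + ∑ i ∈ Finset.range (N0 + 2 * ρ), O e1 ((p : ℤ) - ρ + i) := by
    rw [S1, show N1 + 2 * ρ = p + (N0 + 2 * ρ) by omega, Finset.sum_range_add]
    congr 1
    apply Finset.sum_congr rfl
    intro i _
    congr 1
    push_cast
    ring
  -- the difference
  have diff1 : (∑ᶠ x : ℤ, O e1 x) - (∑ᶠ x : ℤ, O e0 x)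
      = (∑ i ∈ Finset.range p, O e1 (-(ρ : ℤ) + i))
        + ∑ i ∈ Finset.range (N0 + 2 * ρ),
            (O e1 ((p : ℤ) - ρ + i) - O (fun y => e0 (y - (p : ℤ))) ((p : ℤ) - ρ + i)) := by
    rw [S1', S0', Finset.sum_sub_distrib]
    ring
  -- terms with i ≥ 2ρ vanish
  have vanish : ∀ i ∈ Finset.range (N0 + 2 * ρ), ¬ (i ∈ Finset.range (2 * ρ)) →
      (O e1 ((p : ℤ) - ρ + i) - O (fun y => e0 (y - (p : ℤ))) ((p : ℤ) - ρ + i)) = 0 := by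
    intro i _ hi
    rw [Finset.mem_range, not_lt] at hi
    have : O e1 ((p : ℤ) - ρ + i) = O (fun y => e0 (y - (p : ℤ))) ((p : ℤ) - ρ + i) := by
      apply hOcongr
      intro y h1 h2
      have hyp : (p : ℤ) ≤ y := by push_cast at h1 ⊢; omega
      rw [ve1]
      show _ = if 0 ≤ y - (p : ℤ) ∧ y - (p : ℤ) < ((N0 : ℕ) : ℤ) then c (y - (p : ℤ)) else 0
      have hcy : c (y - (p : ℤ)) = c y := by
        rw [← hper (y - (p : ℤ))]
        congr 1
        ring
      rw [hcy]
      by_cases hy : y < (N1 : ℤ)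
      · rw [if_pos (by omega), if_pos (by omega)]
      · rw [if_neg (by omega), if_neg (by omega)]
    rw [this, sub_self]
  have diff2 : (∑ᶠ x : ℤ, O e1 x) - (∑ᶠ x : ℤ, O e0 x)
      = (∑ i ∈ Finset.range p, O e1 (-(ρ : ℤ) + i))
        + ∑ i ∈ Finset.range (2 * ρ),
            (O e1 ((p : ℤ) - ρ + i) - O (fun y => e0 (y - (p : ℤ))) ((p : ℤ) - ρ + i)) := by
    rw [diff1]
    congr 1
    exact (Finset.sum_subset (Finset.range_subset_range.2 (by omega))
      (fun i hi hni => vanish i hi hni)).symm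
  -- in the remaining edge terms, replace shifted e0 by shifted e1
  have edge : ∀ i ∈ Finset.range (2 * ρ),
      O (fun y => e0 (y - (p : ℤ))) ((p : ℤ) - ρ + i) = O e1 (-(ρ : ℤ) + i) := by
    intro i hi
    rw [Finset.mem_range] at hi
    rw [hOshift]
    have : O e0 ((p : ℤ) - ρ + i - p) = O e1 ((p : ℤ) - ρ + i - p) := by
      apply hOcongr
      intro y h1 h2
      rw [ve0, ve1]
      have hy : y < ((N0 : ℕ) : ℤ) := by omega
      by_cases h0 : 0 ≤ y
      · rw [if_pos (by omega), if_pos (by omega)]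
      · rw [if_neg (by omega), if_neg (by omega)]
    rw [this]
    congr 1
    ring
  have diff3 : (∑ᶠ x : ℤ, O e1 x) - (∑ᶠ x : ℤ, O e0 x)
      = (∑ i ∈ Finset.range p, O e1 (-(ρ : ℤ) + i))
        + ((∑ i ∈ Finset.range (2 * ρ), O e1 ((p : ℤ) - ρ + i))
          - ∑ i ∈ Finset.range (2 * ρ), O e1 (-(ρ : ℤ) + i)) := by
    rw [diff2, Finset.sum_sub_distrib]
    congr 2
    exact Finset.sum_congr rfl edge
  -- regroup the three sums into a single block sum over [ρ, ρ+p)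
  have regroup : (∑ i ∈ Finset.range p, O e1 (-(ρ : ℤ) + i))
        + ((∑ i ∈ Finset.range (2 * ρ), O e1 ((p : ℤ) - ρ + i))
          - ∑ i ∈ Finset.range (2 * ρ), O e1 (-(ρ : ℤ) + i))
      = ∑ i ∈ Finset.range p, O e1 ((ρ : ℤ) + i) := by
    have g1 : ∑ i ∈ Finset.range (p + 2 * ρ), O e1 (-(ρ : ℤ) + i)
        = (∑ i ∈ Finset.range p, O e1 (-(ρ : ℤ) + i))
          + ∑ i ∈ Finset.range (2 * ρ), O e1 ((p : ℤ) - ρ + i) := by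
      rw [Finset.sum_range_add]
      congr 1
      apply Finset.sum_congr rfl
      intro i _
      congr 1
      push_cast
      ring
    have g2 : ∑ i ∈ Finset.range (p + 2 * ρ), O e1 (-(ρ : ℤ) + i)
        = (∑ i ∈ Finset.range (2 * ρ), O e1 (-(ρ : ℤ) + i))
          + ∑ i ∈ Finset.range p, O e1 ((ρ : ℤ) + i) := by
      rw [show p + 2 * ρ = 2 * ρ + p by omega, Finset.sum_range_add]
      congr 1
      apply Finset.sum_congr rfl
      intro i _
      congr 1
      push_cast
      ring
    linarith [g1, g2]
  -- finally replace e1 by c in the middle block, and use periodicity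
  have final : ∑ i ∈ Finset.range p, O e1 ((ρ : ℤ) + i) = ∑ i ∈ Finset.range p, O c (i : ℤ) := by
    have h1 : ∀ i ∈ Finset.range p, O e1 ((ρ : ℤ) + i) = O c ((ρ : ℤ) + i) := by
      intro i hi
      rw [Finset.mem_range] at hi
      apply hOcongr
      intro y hy1 hy2
      rw [ve1, if_pos (by push_cast at hy1 hy2 ⊢; omega)]
    rw [Finset.sum_congr rfl h1]
    exact periodic_sum p (O c) hOper (ρ : ℤ)
  rw [diff3, regroup, final]


section main2
set_option linter.unusedSectionVars false
variable [NeZero q] (A : PA q L R) (hA : A.Conservative)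
  (F : (ℤ → Fin q) → ℤ → Fin q) (hglob : ∀ (c : ℤ → Fin q) (i : ℤ), A.glob c i = F c i)

include hA hglob

lemma vel_per (d : ℤ → Fin q) (a : ℤ) (h : ∀ x, d (x + a) = d x) :
    ∀ x, A.vel d (x + a) = A.vel d x := by
  have hds : (fun y => d (y - a)) = d := funext fun y => by
    rw [← h (y - a)]; congr 1; ring
  intro x
  have h2 := vel_shift A d a (x + a)
  rw [hds] at h2
  rw [h2]
  congr 1
  ring

lemma F_per (d : ℤ → Fin q) (a : ℤ) (h : ∀ x, d (x + a) = d x) :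
    ∀ x, F d (x + a) = F d x := by
  have hds : (fun y => d (y - a)) = d := funext fun y => by
    rw [← h (y - a)]; congr 1; ring
  intro x
  have h2 := F_shift A hA F hglob d a (x + a)
  rw [hds] at h2
  rw [h2]
  congr 1
  ring

lemma velF_congr (c c' : ℤ → Fin q) (x : ℤ)
    (h : ∀ y, x - 2 * ((L : ℤ) + R) ≤ y → y ≤ x + 2 * ((L : ℤ) + R) → c y = c' y) :
    A.vel (F c) x = A.vel (F c') x := by
  apply vel_congr
  intro y h1 h2
  apply F_congr A hA F hglob
  intro z hz1 hz2
  exact h z (by omega) (by omega)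

lemma velF_zero (c : ℤ → Fin q) (x : ℤ)
    (h : ∀ y, x - ((L : ℤ) + R) ≤ y → y ≤ x + ((L : ℤ) + R) → (c y : ℕ) = 0) :
    A.vel (F c) x = 0 := by
  apply vel_eq_zero
  apply F_zero A hA F hglob
  intro y h1 h2
  exact h y (by omega) (by omega)

lemma T3
    (hfin : ∀ (c : ℤ → Fin q) (B : ℕ),
      (∀ x : ℤ, (c x : ℕ) ≠ 0 → -(B : ℤ) ≤ x ∧ x ≤ (B : ℤ)) →
      (∑ᶠ i : ℤ, A.vel c i) = ∑ᶠ i : ℤ, A.vel (F c) i) :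
    A.PreservesMomentum F := by
  intro p hp c hper
  set ρ : ℕ := 2 * (L + R) + 1 with hρdef
  set k : ℕ := 3 * ρ + 3 with hkdef
  have htr : ∀ (n : ℕ) (x : ℤ), ((trunc c 0 ((n : ℕ) : ℤ) x : ℕ)) ≠ 0 →
      -(n : ℤ) ≤ x ∧ x ≤ (n : ℤ) := by
    intro n x hx
    by_contra h
    apply hx
    show ((if 0 ≤ x ∧ x < ((n : ℕ) : ℤ) then c x else 0 : Fin q) : ℕ) = 0
    rw [if_neg (by omega)]
    simp
  have O1congr : ∀ (d d' : ℤ → Fin q) (x : ℤ),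
      (∀ y, x - (ρ : ℤ) ≤ y → y ≤ x + (ρ : ℤ) → d y = d' y) → A.vel d x = A.vel d' x := by
    intro d d' x h
    exact vel_congr A d d' x (fun y h1 h2 =>
      h y (by push_cast [hρdef] at h1 ⊢ <;> omega) (by push_cast [hρdef] at h2 ⊢ <;> omega))
  have O1zero : ∀ (d : ℤ → Fin q) (x : ℤ),
      (∀ y, x - (ρ : ℤ) ≤ y → y ≤ x + (ρ : ℤ) → d y = 0) → A.vel d x = 0 := by
    intro d x h
    apply vel_eq_zero
    rw [h x (by omega) (by omega)]
    simp
  have O2congr : ∀ (d d' : ℤ → Fin q) (x : ℤ),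
      (∀ y, x - (ρ : ℤ) ≤ y → y ≤ x + (ρ : ℤ) → d y = d' y) →
      A.vel (F d) x = A.vel (F d') x := by
    intro d d' x h
    apply velF_congr A hA F hglob
    intro y h1 h2
    exact h y (by push_cast [hρdef] at h1 ⊢ <;> omega) (by push_cast [hρdef] at h2 ⊢ <;> omega)
  have O2zero : ∀ (d : ℤ → Fin q) (x : ℤ),
      (∀ y, x - (ρ : ℤ) ≤ y → y ≤ x + (ρ : ℤ) → d y = 0) → A.vel (F d) x = 0 := by
    intro d x h
    apply velF_zero A hA F hglob
    intro y h1 h2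
    rw [h y (by push_cast [hρdef] at h1 ⊢ <;> omega) (by push_cast [hρdef] at h2 ⊢ <;> omega)]
    simp
  have O2shift : ∀ (d : ℤ → Fin q) (a x : ℤ),
      A.vel (F (fun y => d (y - a))) x = A.vel (F d) (x - a) := by
    intro d a x
    have hFs : F (fun y => d (y - a)) = fun i => F d (i - a) :=
      funext (fun i => F_shift A hA F hglob d a i)
    rw [hFs]
    exact vel_shift A (F d) a x
  have kd1 := key_diff p hp c hper (A.vel) ρ (by omega) O1congr O1zero
    (fun d a x => vel_shift A d a x) k (by omega)
  have kd2 := key_diff p hp c hper (fun d => A.vel (F d)) ρ (by omega) O2congr O2zero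
    O2shift k (by omega)
  have h1 := hfin (trunc c 0 (((k+1) * p : ℕ) : ℤ)) ((k+1) * p) (htr _)
  have h0 := hfin (trunc c 0 ((k * p : ℕ) : ℤ)) (k * p) (htr _)
  linarith [kd1, kd2, h1, h0]


lemma T2 (hPM : A.PreservesMomentum F) (c : ℤ → Fin q) (B : ℕ)
    (hB : ∀ x : ℤ, (c x : ℕ) ≠ 0 → -(B : ℤ) ≤ x ∧ x ≤ (B : ℤ)) :
    (∑ᶠ i : ℤ, A.vel c i) = ∑ᶠ i : ℤ, A.vel (F c) i := by
  set m : ℕ := 2 * (L + R) + 1 with hm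
  set p : ℕ := 2 * B + 20 * m with hpdef
  have hp1 : 1 ≤ p := by omega
  set u : ℤ := -(B : ℤ) - (m : ℤ) with hu
  set ct : ℤ → Fin q := fun x => c ((x + (B : ℤ)) % (p : ℤ) - (B : ℤ)) with hct
  have hper : ∀ x : ℤ, ct (x + (p : ℤ)) = ct x := by
    intro x
    show c ((x + (p : ℤ) + (B : ℤ)) % (p : ℤ) - (B : ℤ)) = _
    congr 2
    rw [show x + (p : ℤ) + (B : ℤ) = x + (B : ℤ) + (p : ℤ) by ring]
    simp
  have hpm : (0 : ℤ) < (p : ℤ) := by exact_mod_cast hp1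
  have agree : ∀ x : ℤ, -(B : ℤ) - 3 * (m : ℤ) ≤ x → x ≤ (p : ℤ) - (B : ℤ) - 1 →
      ct x = c x := by
    intro x h1 h2
    by_cases h0 : 0 ≤ x + (B : ℤ)
    · show c ((x + (B : ℤ)) % (p : ℤ) - (B : ℤ)) = c x
      rw [Int.emod_eq_of_lt h0 (by omega)]
      congr 1
      ring
    · have hmod : (x + (B : ℤ)) % (p : ℤ) = x + (B : ℤ) + (p : ℤ) := by
        rw [show (x + (B : ℤ)) % (p : ℤ) = (x + (B : ℤ) + (p : ℤ)) % (p : ℤ) from by simp]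
        exact Int.emod_eq_of_lt (by push_cast [hpdef, hm] at *; omega) (by omega)
      show c ((x + (B : ℤ)) % (p : ℤ) - (B : ℤ)) = c x
      rw [hmod]
      have e1 : (c (x + (B : ℤ) + (p : ℤ) - (B : ℤ)) : ℕ) = 0 := by
        by_contra h
        have := hB _ h
        push_cast [hpdef, hm] at *
        omega
      have e2 : (c x : ℕ) = 0 := by
        by_contra h
        have := hB _ h
        omega
      exact Fin.val_injective (e1.trans e2.symm)
  have key := hPM p hp1 ct hper
  -- side 1 : the configuration itself
  have velper := vel_per A hA F hglob ct (p : ℤ) hper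
  have s1 : ∑ i ∈ Finset.range p, A.vel ct (i : ℤ)
      = ∑ i ∈ Finset.range p, A.vel ct (u + (i : ℤ)) :=
    (periodic_sum p (A.vel ct) velper u).symm
  have s1' : ∀ i ∈ Finset.range p, A.vel ct (u + (i : ℤ)) = A.vel c (u + (i : ℤ)) := by
    intro i hi
    rw [Finset.mem_range] at hi
    apply vel_congr
    intro y h1 h2
    apply agree y
    · push_cast [hu, hm] at *; omega
    · have : (i : ℤ) ≤ (p : ℤ) - 1 := by exact_mod_cast Nat.le_sub_one_of_lt hi
      push_cast [hu, hm, hpdef] at *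
      omega
  have s1'' : ∑ i ∈ Finset.range p, A.vel c (u + (i : ℤ)) = ∑ᶠ i : ℤ, A.vel c i := by
    rw [← sum_blk]
    symm
    apply finsum_eq_sum_of_support_subset
    intro x hx
    simp only [Function.mem_support] at hx
    rw [Finset.mem_coe, mem_blk]
    by_contra hxb
    apply hx
    apply vel_eq_zero
    by_contra hc
    have := hB x hc
    push_cast [hu, hm, hpdef] at *
    omega
  -- side 2 : the image configuration
  have Fper := F_per A hA F hglob ct (p : ℤ) hper
  have velFper := vel_per A hA F hglob (F ct) (p : ℤ) Fper
  have s2 : ∑ i ∈ Finset.range p, A.vel (F ct) (i : ℤ)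
      = ∑ i ∈ Finset.range p, A.vel (F ct) (u + (i : ℤ)) :=
    (periodic_sum p (A.vel (F ct)) velFper u).symm
  have s2' : ∀ i ∈ Finset.range p, A.vel (F ct) (u + (i : ℤ)) = A.vel (F c) (u + (i : ℤ)) := by
    intro i hi
    rw [Finset.mem_range] at hi
    apply velF_congr A hA F hglob
    intro y h1 h2
    apply agree y
    · push_cast [hu, hm] at *; omega
    · have : (i : ℤ) ≤ (p : ℤ) - 1 := by exact_mod_cast Nat.le_sub_one_of_lt hi
      push_cast [hu, hm, hpdef] at *
      omega
  have hFB := F_bound A hA F hglob c B hB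
  have s2'' : ∑ i ∈ Finset.range p, A.vel (F c) (u + (i : ℤ)) = ∑ᶠ i : ℤ, A.vel (F c) i := by
    rw [← sum_blk]
    symm
    apply finsum_eq_sum_of_support_subset
    intro x hx
    simp only [Function.mem_support] at hx
    rw [Finset.mem_coe, mem_blk]
    by_contra hxb
    apply hx
    apply vel_eq_zero
    by_contra hc
    have := hFB x hc
    push_cast [hu, hm, hpdef] at *
    omega
  rw [s1, Finset.sum_congr rfl s1', s1''] at key
  rw [s2, Finset.sum_congr rfl s2', s2''] at key
  exact key


omit hA hglob in
lemma exists_bound (c : ℤ → Fin q) (hc : {i : ℤ | c i ≠ 0}.Finite) :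
    ∃ B : ℕ, ∀ x : ℤ, (c x : ℕ) ≠ 0 → -(B : ℤ) ≤ x ∧ x ≤ (B : ℤ) := by
  refine ⟨hc.toFinset.sup (fun i => i.natAbs), ?_⟩
  intro x hx
  have hx' : c x ≠ 0 := fun h => hx (by rw [h]; simp)
  have hmem : x ∈ hc.toFinset := by rw [Set.Finite.mem_toFinset]; exact hx'
  have h2 : x.natAbs ≤ hc.toFinset.sup (fun i => i.natAbs) :=
    Finset.le_sup (f := fun i : ℤ => i.natAbs) hmem
  omega

lemma key : A.PreservesMomentum F ↔
    (∀ c : ℤ → Fin q, {i : ℤ | c i ≠ 0}.Finite →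
      (∑ᶠ i : ℤ, ∑ᶠ j : ℤ, if j ≤ i then ((c j : ℤ)) - ((F c j : ℤ)) else 0) =
      (∑ᶠ i : ℤ, ∑ᶠ j : ℤ, if j ≤ i then ((F c j : ℤ)) - ((F (F c) j : ℤ)) else 0)) := by
  have bound' : ∀ (c : ℤ → Fin q) (B : ℕ),
      (∀ x : ℤ, (c x : ℕ) ≠ 0 → -(B : ℤ) ≤ x ∧ x ≤ (B : ℤ)) →
      (∀ x : ℤ, ((F c x : ℕ)) ≠ 0 →
        -((B + L + R : ℕ) : ℤ) ≤ x ∧ x ≤ ((B + L + R : ℕ) : ℤ)) := by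
    intro c B hB x hx
    have h := F_bound A hA F hglob c B hB x hx
    push_cast at h ⊢
    omega
  constructor
  · intro hPM c hc
    obtain ⟨B, hB⟩ := exists_bound c hc
    rw [lemA A hA F hglob c B hB,
      lemA A hA F hglob (F c) (B + L + R) (bound' c B hB)]
    exact T2 A hA F hglob hPM c B hB
  · intro hC
    apply T3 A hA F hglob
    intro c B hB
    have hfin : {i : ℤ | c i ≠ 0}.Finite := by
      apply (Set.finite_Icc (-(B : ℤ)) (B : ℤ)).subset
      intro x hx
      simp only [Set.mem_setOf_eq] at hx
      have : (c x : ℕ) ≠ 0 := fun h => hx (Fin.val_injective (by simpa using h))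
      exact Set.mem_Icc.2 (hB x this)
    have h := hC c hfin
    rwa [lemA A hA F hglob c B hB,
      lemA A hA F hglob (F c) (B + L + R) (bound' c B hB)] at h

end main2

end PAaux

/-- a conservative particle automaton `G` whose global map is the
conservative CA `F` preserves momentum iff `F` satisfies the stated two-step condition on
finite configurations; consequently momentum preservation depends only on `F`, not on the
particular particle representation. -/
theorem momentum_preservation_intrinsic
    (q n : ℕ) [NeZero q] (hn : 1 ≤ n)
    (f : (Fin n → Fin q) → Fin q)
    (ℓ : ℕ) (hℓ : ℓ ≤ n - 1)
    (F : (ℤ → Fin q) → ℤ → Fin q)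
    (hF : ∀ (c : ℤ → Fin q) (i : ℤ),
      F c i = f (fun t => c (i - (ℓ : ℤ) + ((t : ℕ) : ℤ))))
    (hFcons : ∀ p : ℕ, 1 ≤ p → ∀ c : ℤ → Fin q, (∀ i : ℤ, c (i + (p : ℤ)) = c i) →
      ∑ k ∈ Finset.range p, ((F c (k : ℤ) : ℕ)) = ∑ k ∈ Finset.range p, ((c (k : ℤ) : ℕ)))
    (L R : ℕ) (G : PA q L R) (hG : G.Conservative)
    (hglob : ∀ (c : ℤ → Fin q) (i : ℤ), G.glob c i = F c i) :
    (G.PreservesMomentum F ↔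
      (∀ c : ℤ → Fin q, {i : ℤ | c i ≠ 0}.Finite →
        (∑ᶠ i : ℤ, ∑ᶠ j : ℤ, if j ≤ i then ((c j : ℤ)) - ((F c j : ℤ)) else 0) =
        (∑ᶠ i : ℤ, ∑ᶠ j : ℤ, if j ≤ i then ((F c j : ℤ)) - ((F (F c) j : ℤ)) else 0))) ∧
    (∀ (L' R' : ℕ) (G' : PA q L' R'), G'.Conservative →
      (∀ (c : ℤ → Fin q) (i : ℤ), G'.glob c i = F c i) →
      (G.PreservesMomentum F ↔ G'.PreservesMomentum F)) := by
  constructor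
  · exact PAaux.key G hG F hglob
  · intro L' R' G' hG' hglob'
    exact (PAaux.key G hG F hglob).trans (PAaux.key G' hG' F hglob').symm
end
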